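/- arXiv:2404.10900 — 6 statements merged into one kernel-verified Lean document; each statement's English description precedes it below -/
import Mathlib

section
/- If V is a real vector space, (W,⪰) is a Dedekind complete Riesz space, and h : V → W is ⪰-sublinear (subadditive and positively homogeneous), then for every x ∈ V, h(x) = sup { ℓ(x) : ℓ linear V → W, ℓ ≤ h pointwise }, and moreover the supremum is attained for each x. -/
open Set LinearMap Submodule

section Aux

variable {V W : Type*} [AddCommGroup V] [Module ℝ V]
    [ConditionallyCompleteLattice W] [AddCommGroup W] [Module ℝ W]
    [CovariantClass W W (· + ·) (· ≤ ·)] [PosSMulMono ℝ W]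
    {h : V → W}
    (hsub : ∀ x y : V, h (x + y) ≤ h x + h y)
    (hpos : ∀ a : ℝ, 0 ≤ a → ∀ x : V, h (a • x) = a • h x)

include hsub hpos

private theorem hb_step (f : V →ₗ.[ℝ] W) (dom : ∀ z : f.domain, f z ≤ h z)
    (hdom : f.domain ≠ ⊤) :
    ∃ g, f < g ∧ ∀ z : g.domain, g z ≤ h z := by
  obtain ⟨y, -, hy⟩ : ∃ y ∈ (⊤ : Submodule ℝ V), y ∉ f.domain :=
    SetLike.exists_of_lt (lt_top_iff_ne_top.2 hdom)
  set S : Set W := Set.range (fun z : f.domain => f z - h ((z : V) - y)) with hS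
  have hSne : S.Nonempty := ⟨_, ⟨0, rfl⟩⟩
  have hub : ∀ w : f.domain, ∀ s ∈ S, s ≤ h ((w : V) + y) - f w := by
    rintro w s ⟨z, rfl⟩
    have h1 : h ((z : V) + (w : V)) ≤ h ((z : V) - y) + h ((w : V) + y) := by
      have e : (z : V) + (w : V) = ((z : V) - y) + ((w : V) + y) := by abel
      rw [e]; exact hsub _ _
    have h2 : f z + f w ≤ h ((z : V) - y) + h ((w : V) + y) :=
      le_trans (by rw [← f.map_add]; exact dom (z + w)) h1
    rw [sub_le_sub_iff]
    calc f z + f w ≤ h ((z : V) - y) + h ((w : V) + y) := h2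
      _ = h ((w : V) + y) + h ((z : V) - y) := add_comm _ _
  have hbdd : BddAbove S := ⟨_, hub 0⟩
  set c : W := sSup S with hc
  have hcle : ∀ w : f.domain, c ≤ h ((w : V) + y) - f w := fun w => csSup_le hSne (hub w)
  have hlec : ∀ z : f.domain, f z - h ((z : V) - y) ≤ c := fun z => le_csSup hbdd ⟨z, rfl⟩
  refine ⟨f.supSpanSingleton y c hy, ?_, ?_⟩
  · refine lt_iff_le_not_ge.2 ⟨f.left_le_sup _ _, fun H => ?_⟩
    replace H := LinearPMap.domain_mono.monotone H
    rw [LinearPMap.domain_supSpanSingleton, sup_le_iff, Submodule.span_le,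
      singleton_subset_iff] at H
    exact hy H.2
  · rintro ⟨z, hz⟩
    rcases Submodule.mem_sup.1 hz with ⟨x', hx', y', hy', rfl⟩
    rcases Submodule.mem_span_singleton.1 hy' with ⟨r, rfl⟩
    rw [LinearPMap.supSpanSingleton_apply_mk _ _ _ _ _ hx']
    rcases lt_trichotomy r 0 with (hr | hr | hr)
    · -- r < 0 : use f w - h (w - y) ≤ c  with  w = (-r)⁻¹ • x'
      have hrpos : 0 < -r := neg_pos.2 hr
      set w : f.domain := (-r)⁻¹ • ⟨x', hx'⟩
      have key : f w - h ((w : V) - y) ≤ c := hlec w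
      have := smul_le_smul_of_nonneg_left key hrpos.le
      rw [smul_sub, f.map_smul, smul_smul, mul_inv_cancel₀ hrpos.ne', one_smul] at this
      have e1 : (-r) • ((w : V) - y) = x' + r • y := by
        show (-r) • ((-r)⁻¹ • x' - y) = x' + r • y
        rw [smul_sub, smul_smul, mul_inv_cancel₀ hrpos.ne', one_smul, neg_smul, sub_neg_eq_add]
      rw [← hpos (-r) hrpos.le, e1, neg_smul] at this
      -- this : f ⟨x',hx'⟩ - h (x' + r • y) ≤ -(r • c)
      have := add_le_add_left this (h (x' + r • y) + r • c)
      calc f ⟨x', hx'⟩ + r • c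
          = f ⟨x', hx'⟩ - h (x' + r • y) + (h (x' + r • y) + r • c) := by abel
        _ ≤ -(r • c) + (h (x' + r • y) + r • c) := this
        _ = h (x' + r • y) := by abel
    · subst hr
      simp only [RingHom.id_apply, zero_smul, add_zero]
      exact dom ⟨x', hx'⟩
    · -- r > 0 : use c ≤ h (w + y) - f w  with  w = r⁻¹ • x'
      set w : f.domain := r⁻¹ • ⟨x', hx'⟩
      have key : c ≤ h ((w : V) + y) - f w := hcle w
      have := smul_le_smul_of_nonneg_left key hr.le
      rw [smul_sub, f.map_smul, smul_smul, mul_inv_cancel₀ hr.ne', one_smul] at this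
      have e1 : r • ((w : V) + y) = x' + r • y := by
        show r • (r⁻¹ • x' + y) = x' + r • y
        rw [smul_add, smul_smul, mul_inv_cancel₀ hr.ne', one_smul]
      rw [← hpos r hr.le, e1] at this
      -- this : r • c ≤ h (x' + r • y) - f ⟨x', hx'⟩
      have := add_le_add_left this (f ⟨x', hx'⟩)
      calc f ⟨x', hx'⟩ + r • c = r • c + f ⟨x', hx'⟩ := add_comm _ _
        _ ≤ h (x' + r • y) - f ⟨x', hx'⟩ + f ⟨x', hx'⟩ := this
        _ = h (x' + r • y) := by abel

private theorem hb_top (p : V →ₗ.[ℝ] W) (hp : ∀ z : p.domain, p z ≤ h z) :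
    ∃ q ≥ p, q.domain = ⊤ ∧ ∀ z : q.domain, q z ≤ h z := by
  set S := { f : V →ₗ.[ℝ] W | ∀ z : f.domain, f z ≤ h z }
  have hSc : ∀ c, c ⊆ S → IsChain (· ≤ ·) c → ∀ y ∈ c, ∃ ub ∈ S, ∀ z ∈ c, z ≤ ub := by
    intro c hcs c_chain y hy
    have cne : c.Nonempty := ⟨y, hy⟩
    have hcd : DirectedOn (· ≤ ·) c := c_chain.directedOn
    refine ⟨LinearPMap.sSup c hcd, ?_, fun _ => LinearPMap.le_sSup hcd⟩
    rintro ⟨x, hx⟩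
    have hdir : DirectedOn (· ≤ ·) (LinearPMap.domain '' c) :=
      directedOn_image.2 (hcd.mono LinearPMap.domain_mono.monotone)
    rcases (Submodule.mem_sSup_of_directed (cne.image _) hdir).1 hx with ⟨_, ⟨f, hfc, rfl⟩, hfx⟩
    have hle : f ≤ LinearPMap.sSup c hcd := LinearPMap.le_sSup _ hfc
    convert ← hcs hfc ⟨x, hfx⟩ using 1
    exact hle.2 rfl
  obtain ⟨q, hpq, hqS, hq⟩ := zorn_le_nonempty₀ S hSc p hp
  refine ⟨q, hpq, ?_, hqS⟩
  by_contra hqd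
  rcases hb_step hsub hpos q hqS hqd with ⟨r, hqr, hr⟩
  exact hqr.ne' ((hq hr hqr.le).antisymm hqr.le)

private theorem hb_ext (p : V →ₗ.[ℝ] W) (hp : ∀ z : p.domain, p z ≤ h z) :
    ∃ g : V →ₗ[ℝ] W, (∀ z : p.domain, g z = p z) ∧ ∀ v, g v ≤ h v := by
  rcases hb_top hsub hpos p hp with ⟨⟨gdom, g⟩, ⟨hsub', hfg⟩, (rfl : gdom = ⊤), hgs⟩
  refine ⟨g.comp (LinearMap.id.codRestrict ⊤ fun _ => trivial), ?_, ?_⟩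
  · exact fun z => (hfg rfl).symm
  · exact fun v => hgs ⟨v, trivial⟩

end Aux

/-- Envelope representation of sublinear maps into a Dedekind complete
Riesz space: `h x` is the greatest element of the set of values `ℓ x` over linear maps
`ℓ` dominated by `h`; in particular `h x` equals the (attained) supremum of that set. -/
theorem stmt_0 {V W : Type*} [AddCommGroup V] [Module ℝ V]
    [ConditionallyCompleteLattice W] [AddCommGroup W] [Module ℝ W]
    [CovariantClass W W (· + ·) (· ≤ ·)] [PosSMulMono ℝ W]
    (h : V → W)
    (hsub : ∀ x y : V, h (x + y) ≤ h x + h y)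
    (hpos : ∀ a : ℝ, 0 ≤ a → ∀ x : V, h (a • x) = a • h x)
    (x : V) :
    IsGreatest {w : W | ∃ ℓ : V →ₗ[ℝ] W, (∀ v, ℓ v ≤ h v) ∧ ℓ x = w} (h x) := by
  have h0 : h 0 = 0 := by simpa using hpos 0 le_rfl 0
  constructor
  · -- membership: exists ℓ with ℓ x = h x
    by_cases hx0 : x = 0
    · -- extend the zero map on ⊥
      have hp : ∀ z : ((0 : V →ₗ[ℝ] W).toPMap ⊥).domain,
          ((0 : V →ₗ[ℝ] W).toPMap ⊥) z ≤ h z := by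
        rintro ⟨z, hz⟩
        have : z = 0 := by simpa using hz
        simp [LinearMap.toPMap, this, h0]
      obtain ⟨g, -, hg⟩ := hb_ext hsub hpos _ hp
      exact ⟨g, hg, by rw [hx0, map_zero, h0]⟩
    · have hp : ∀ z : (LinearPMap.mkSpanSingleton (K := ℝ) (σ := RingHom.id ℝ) x (h x) hx0).domain,
          (LinearPMap.mkSpanSingleton (K := ℝ) (σ := RingHom.id ℝ) x (h x) hx0) z ≤ h z := by
        rintro ⟨z, hz⟩
        rcases Submodule.mem_span_singleton.1 hz with ⟨r, rfl⟩
        erw [LinearPMap.mkSpanSingleton'_apply]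
        show r • h x ≤ h (r • x)
        rcases le_or_gt 0 r with hr | hr
        · rw [hpos r hr]
        · -- r < 0 : r • h x = -h(-(r•x)) ≤ h (r•x)
          have e : h (-(r • x)) = (-r) • h x := by
            rw [show -(r • x) = (-r) • x by rw [neg_smul], hpos (-r) (neg_nonneg.2 hr.le)]
          have h1 : (0 : W) ≤ h (r • x) + h (-(r • x)) := by
            have := hsub (r • x) (-(r • x))
            simpa [h0] using this
          have := add_le_add_left h1 (-(h (-(r • x))))
          calc r • h x = -((-r) • h x) := by rw [neg_smul, neg_neg]
            _ = 0 + -(h (-(r • x))) := by rw [e]; abel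
            _ ≤ h (r • x) + h (-(r • x)) + -(h (-(r • x))) := this
            _ = h (r • x) := by abel
      obtain ⟨g, hgp, hg⟩ := hb_ext hsub hpos _ hp
      refine ⟨g, hg, ?_⟩
      have := hgp ⟨x, Submodule.mem_span_singleton_self x⟩
      rwa [LinearPMap.mkSpanSingleton_apply] at this
  · rintro w ⟨ℓ, hℓ, rfl⟩
    exact hℓ x
end

section
/- Let (V,⪰_V) be a partially ordered vector space, (W,⪰_W) a Dedekind complete Riesz space, S ⊆ V a vector subspace, h : V → W monotone and ⪰_W-sublinear, and ℓ : S → W a positive linear map with ℓ ≤ h on S. Then ℓ extends to a positive linear map ℓ* : V → W with ℓ* ≤ h on all of V. -/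
open Set Submodule

section HBK

variable {V W : Type*} [AddCommGroup V] [Module ℝ V]
  [ConditionallyCompleteLattice W] [AddCommGroup W] [Module ℝ W]
  [CovariantClass W W (· + ·) (· ≤ ·)] [PosSMulMono ℝ W]

private lemma hbk_step (h : V → W)
    (hsub : ∀ x y : V, h (x + y) ≤ h x + h y)
    (hph : ∀ a : ℝ, 0 ≤ a → ∀ x : V, h (a • x) = a • h x)
    (f : V →ₗ.[ℝ] W) (hf : ∀ x : f.domain, f x ≤ h (x : V))
    (hd : f.domain ≠ ⊤) :
    ∃ g, f < g ∧ ∀ x : g.domain, g x ≤ h (x : V) := by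
  obtain ⟨y, -, hy⟩ : ∃ y ∈ (⊤ : Submodule ℝ V), y ∉ f.domain :=
    SetLike.exists_of_lt (lt_top_iff_ne_top.2 hd)
  set A : Set W := Set.range (fun x : f.domain => f x - h ((x : V) - y)) with hA
  have key : ∀ x z : f.domain, f x - h ((x : V) - y) ≤ h ((z : V) + y) - f z := by
    intro x z
    have h1 : f x + f z = f (x + z) := (f.map_add x z).symm
    have h2 : h ((x : V) + z) ≤ h ((x : V) - y) + h ((z : V) + y) := by
      have : (x : V) + z = ((x : V) - y) + ((z : V) + y) := by abel
      rw [this]; exact hsub _ _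
    have : f x + f z ≤ h ((x : V) - y) + h ((z : V) + y) := by
      rw [h1]; exact (hf (x + z)).trans (by push_cast; exact h2)
    have := sub_le_sub_right (sub_le_sub_right this (h ((x : V) - y))) (f z)
    calc f x - h ((x : V) - y)
        = f x + f z - h ((x : V) - y) - f z := by abel
      _ ≤ h ((x : V) - y) + h ((z : V) + y) - h ((x : V) - y) - f z := this
      _ = h ((z : V) + y) - f z := by abel
  have Ane : A.Nonempty := ⟨_, ⟨0, rfl⟩⟩
  have Abdd : BddAbove A := by
    refine ⟨h (0 + y) - f 0, ?_⟩
    rintro _ ⟨x, rfl⟩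
    simpa using key x 0
  set c : W := sSup A with hc
  have le_c : ∀ x : f.domain, f x - h ((x : V) - y) ≤ c := fun x =>
    le_csSup Abdd ⟨x, rfl⟩
  have c_le : ∀ z : f.domain, c ≤ h ((z : V) + y) - f z := fun z =>
    csSup_le Ane (by rintro _ ⟨x, rfl⟩; exact key x z)
  refine ⟨f.supSpanSingleton y c hy, ?_, ?_⟩
  · refine lt_iff_le_not_ge.2 ⟨f.left_le_sup _ _, fun H => ?_⟩
    replace H := LinearPMap.domain_mono.monotone H
    rw [LinearPMap.domain_supSpanSingleton, sup_le_iff, span_le, singleton_subset_iff] at H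
    exact hy H.2
  · rintro ⟨z, hz⟩
    rcases mem_sup.1 hz with ⟨x, hx, y', hy', rfl⟩
    rcases mem_span_singleton.1 hy' with ⟨r, rfl⟩
    rw [LinearPMap.supSpanSingleton_apply_mk _ _ _ _ _ hx]
    rcases lt_trichotomy r 0 with (hr | hr | hr)
    · set s : ℝ := -r with hs
      have hspos : 0 < s := by rw [hs]; linarith
      have h1 : f (s⁻¹ • ⟨x, hx⟩) - h ((s⁻¹ • x : V) - y) ≤ c := le_c (s⁻¹ • ⟨x, hx⟩)
      have h2 := smul_le_smul_of_nonneg_left h1 hspos.le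
      rw [smul_sub, ← f.map_smul, smul_smul, mul_inv_cancel₀ hspos.ne', one_smul,
        ← hph s hspos.le, smul_sub, smul_smul, mul_inv_cancel₀ hspos.ne', one_smul] at h2
      have h3 : f ⟨x, hx⟩ - s • c ≤ h (x - s • y) := by
        rw [sub_le_iff_le_add] at h2 ⊢
        rwa [add_comm]
      calc f ⟨x, hx⟩ + r • c = f ⟨x, hx⟩ - s • c := by rw [hs]; module
        _ ≤ h (x - s • y) := h3
        _ = h (x + r • y) := by rw [show x + r • y = x - s • y by rw [hs]; module]
    · subst hr
      simpa using hf ⟨x, hx⟩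
    · have h1 : c ≤ h ((r⁻¹ • x : V) + y) - f (r⁻¹ • ⟨x, hx⟩) := c_le (r⁻¹ • ⟨x, hx⟩)
      have h2 := smul_le_smul_of_nonneg_left h1 hr.le
      rw [smul_sub, ← f.map_smul, smul_smul, mul_inv_cancel₀ hr.ne', one_smul,
        ← hph r hr.le, smul_add, smul_smul, mul_inv_cancel₀ hr.ne', one_smul] at h2
      have := add_le_add_right h2 (f ⟨x, hx⟩)
      calc f ⟨x, hx⟩ + r • c ≤ f ⟨x, hx⟩ + (h (x + r • y) - f ⟨x, hx⟩) := this
        _ = h (x + r • y) := by abel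

private lemma hbk_top (h : V → W)
    (hsub : ∀ x y : V, h (x + y) ≤ h x + h y)
    (hph : ∀ a : ℝ, 0 ≤ a → ∀ x : V, h (a • x) = a • h x)
    (p : V →ₗ.[ℝ] W) (hp : ∀ x : p.domain, p x ≤ h (x : V)) :
    ∃ q ≥ p, q.domain = ⊤ ∧ ∀ x : q.domain, q x ≤ h (x : V) := by
  set S := { f : V →ₗ.[ℝ] W | ∀ x : f.domain, f x ≤ h (x : V) }
  have hSc : ∀ c, c ⊆ S → IsChain (· ≤ ·) c → ∀ y ∈ c, ∃ ub ∈ S, ∀ z ∈ c, z ≤ ub := by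
    intro c hcs c_chain y hy
    have cne : c.Nonempty := ⟨y, hy⟩
    have hcd : DirectedOn (· ≤ ·) c := c_chain.directedOn
    refine ⟨LinearPMap.sSup c hcd, ?_, fun _ ↦ LinearPMap.le_sSup hcd⟩
    rintro ⟨x, hx⟩
    have hdir : DirectedOn (· ≤ ·) (LinearPMap.domain '' c) :=
      directedOn_image.2 (hcd.mono LinearPMap.domain_mono.monotone)
    rcases (mem_sSup_of_directed (cne.image _) hdir).1 hx with ⟨_, ⟨f, hfc, rfl⟩, hfx⟩
    have hle : f ≤ LinearPMap.sSup c hcd := LinearPMap.le_sSup _ hfc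
    convert ← hcs hfc ⟨x, hfx⟩ using 1
    exact hle.2 rfl
  obtain ⟨q, hpq, hqs, hq⟩ := zorn_le_nonempty₀ S hSc p hp
  refine ⟨q, hpq, ?_, hqs⟩
  contrapose! hq
  rcases hbk_step h hsub hph q hqs hq with ⟨r, hqr, hr⟩
  exact ⟨r, hr, hqr.le, fun hrq ↦ hqr.ne' <| hrq.antisymm hqr.le⟩

end HBK

/-- Hahn–Banach–Kantorovich extension with positivity: a positive linear
map `ℓ` on a subspace `S`, dominated by a monotone sublinear map `h` into a Dedekind
complete Riesz space, extends to a positive linear map on all of `V` dominated by `h`. -/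
theorem stmt_1 {V W : Type*} [AddCommGroup V] [PartialOrder V] [Module ℝ V]
    [CovariantClass V V (· + ·) (· ≤ ·)] [PosSMulMono ℝ V]
    [ConditionallyCompleteLattice W] [AddCommGroup W] [Module ℝ W]
    [CovariantClass W W (· + ·) (· ≤ ·)] [PosSMulMono ℝ W]
    (h : V → W) (hmono : Monotone h)
    (hsub : ∀ x y : V, h (x + y) ≤ h x + h y)
    (hph : ∀ a : ℝ, 0 ≤ a → ∀ x : V, h (a • x) = a • h x)
    (S : Submodule ℝ V) (ℓ : S →ₗ[ℝ] W)
    (hℓpos : ∀ s : S, (0 : V) ≤ (s : V) → 0 ≤ ℓ s)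
    (hdom : ∀ s : S, ℓ s ≤ h (s : V)) :
    ∃ L : V →ₗ[ℝ] W, (∀ v : V, 0 ≤ v → 0 ≤ L v) ∧ (∀ v : V, L v ≤ h v) ∧
      ∀ s : S, L (s : V) = ℓ s := by
  rcases hbk_top h hsub hph ⟨S, ℓ⟩ hdom with
    ⟨⟨q_dom, qf⟩, hq, (rfl : q_dom = ⊤), hqdom⟩
  set q : V →ₗ.[ℝ] W := ⟨⊤, qf⟩ with hqdef
  set L : V →ₗ[ℝ] W :=
    qf.comp (LinearMap.id.codRestrict ⊤ fun _ ↦ trivial) with hL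
  have hLq : ∀ v : V, L v = q ⟨v, trivial⟩ := fun v => rfl
  have h0 : h 0 = 0 := by
    have := hph 0 le_rfl 0
    simpa using this
  have hLdom : ∀ v : V, L v ≤ h v := fun v => hqdom ⟨v, trivial⟩
  refine ⟨L, ?_, hLdom, ?_⟩
  · intro v hv
    have h1 : L (-v) ≤ h (-v) := hLdom (-v)
    have h2 : h (-v) ≤ h 0 := hmono (by simpa using hv)
    have : -(L v) ≤ 0 := by
      rw [← map_neg]
      exact h1.trans (h2.trans_eq h0)
    exact neg_nonpos.1 this
  · intro s
    have : (⟨S, ℓ⟩ : V →ₗ.[ℝ] W) ≤ q := hq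
    exact (this.2 (x := ⟨(s : V), s.2⟩) (y := ⟨(s : V), trivial⟩) rfl).symm
end

section
/- Let (V,⪰) be a Dedekind complete Riesz space and W ⊆ V a Dedekind complete Riesz subspace. If h : V → W is monotone, ⪰-sublinear, and W-normalized (h(w) = w for all w ∈ W), then every linear ℓ : V → W with ℓ ≤ h satisfies ℓ(w) = w for all w ∈ W, and consequently h(x) = sup { ℓ(x) : ℓ linear, positive, W-normalized, ℓ ≤ h } for all x ∈ V. -/
open Submodule Set

section HB

variable {V : Type*} [ConditionallyCompleteLattice V] [AddCommGroup V] [Module ℝ V]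
    [CovariantClass V V (· + ·) (· ≤ ·)] [PosSMulMono ℝ V]
    (W : Submodule ℝ V) (h : V → V)

theorem hb_step_s3 (hrange : ∀ x, h x ∈ W) (hmono : Monotone h)
    (hsub : ∀ x y : V, h (x + y) ≤ h x + h y)
    (hph : ∀ a : ℝ, 0 ≤ a → ∀ x : V, h (a • x) = a • h x)
    (hnorm : ∀ w ∈ W, h w = w)
    (f : V →ₗ.[ℝ] V)
    (hf : ∀ y : f.domain, f y ∈ W ∧ f y ≤ h y)
    (hdom : f.domain ≠ ⊤) :
    ∃ g, f < g ∧ ∀ y : g.domain, g y ∈ W ∧ g y ≤ h y := by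
  obtain ⟨z, -, hz⟩ : ∃ z ∈ ⊤, z ∉ f.domain := SetLike.exists_of_lt (lt_top_iff_ne_top.2 hdom)
  set U : Set V := Set.range fun y : f.domain => h (↑y + z) - f y with hU
  have key : ∀ y₁ y₂ : f.domain, f y₁ - h (↑y₁ - z) ≤ h (↑y₂ + z) - f y₂ := by
    intro y₁ y₂
    rw [sub_le_sub_iff]
    have h1 : f y₁ + f y₂ ≤ h (↑y₁ + ↑y₂) := by
      rw [← f.map_add]; exact (hf (y₁ + y₂)).2
    have h2 : h (↑y₁ + ↑y₂ : V) ≤ h (↑y₂ + z) + h (↑y₁ - z) := by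
      have := hsub (↑y₂ + z) (↑y₁ - z)
      have e : (↑y₂ + z) + (↑y₁ - z) = (↑y₁ + ↑y₂ : V) := by abel
      rwa [e] at this
    exact h1.trans h2
  have Une : U.Nonempty := ⟨_, ⟨0, rfl⟩⟩
  have Ubdd : BddBelow U := by
    refine ⟨f 0 - h (↑(0 : f.domain) - z), ?_⟩
    rintro u ⟨y, rfl⟩
    exact key 0 y
  set c := h (sInf U) with hc
  have hcW : c ∈ W := hrange _
  have hc_le : ∀ y : f.domain, c ≤ h (↑y + z) - f y := by
    intro y
    have h1 : sInf U ≤ h (↑y + z) - f y := csInf_le Ubdd ⟨y, rfl⟩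
    have h2 : h (↑y + z) - f y ∈ W := W.sub_mem (hrange _) (hf y).1
    calc c ≤ h (h (↑y + z) - f y) := hmono h1
    _ = _ := hnorm _ h2
  have hle_c : ∀ y : f.domain, f y - h (↑y - z) ≤ c := by
    intro y
    have h1 : f y - h (↑y - z) ≤ sInf U := by
      refine le_csInf Une ?_
      rintro u ⟨y₂, rfl⟩
      exact key y y₂
    have h2 : f y - h (↑y - z) ∈ W := W.sub_mem (hf y).1 (hrange _)
    calc f y - h (↑y - z) = h _ := (hnorm _ h2).symm
    _ ≤ c := hmono h1
  refine ⟨f.supSpanSingleton z c hz, ?_, ?_⟩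
  · refine lt_iff_le_not_ge.2 ⟨f.left_le_sup _ _, fun H => ?_⟩
    replace H := LinearPMap.domain_mono.monotone H
    rw [LinearPMap.domain_supSpanSingleton, sup_le_iff, span_le, singleton_subset_iff] at H
    exact hz H.2
  · rintro ⟨v, hv⟩
    rw [LinearPMap.domain_supSpanSingleton] at hv
    rcases mem_sup.1 hv with ⟨y, hy, y', hy', rfl⟩
    rcases mem_span_singleton.1 hy' with ⟨r, rfl⟩
    rw [LinearPMap.supSpanSingleton_apply_mk _ _ _ _ _ hy]
    constructor
    · exact W.add_mem (hf ⟨y, hy⟩).1 (W.smul_mem _ hcW)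
    rcases lt_trichotomy r 0 with hr | hr | hr
    · -- r < 0
      have hr' : (0:ℝ) < -r := neg_pos.2 hr
      have h1 := hle_c ((-r)⁻¹ • ⟨y, hy⟩)
      have h2 : (-r) • (f ((-r)⁻¹ • (⟨y, hy⟩ : f.domain)) - h (↑((-r)⁻¹ • (⟨y, hy⟩ : f.domain)) - z))
          ≤ (-r) • c := smul_le_smul_of_nonneg_left h1 hr'.le
      rw [smul_sub, ← f.map_smul, smul_smul, mul_inv_cancel₀ hr'.ne', one_smul] at h2
      have e1 : (-r) • (↑((-r)⁻¹ • (⟨y, hy⟩ : f.domain)) - z) = y + r • z := by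
        push_cast
        rw [smul_sub, smul_smul, mul_inv_cancel₀ hr'.ne', one_smul, neg_smul, sub_neg_eq_add]
      have e2 : (-r) • h (↑((-r)⁻¹ • (⟨y, hy⟩ : f.domain)) - z) = h (y + r • z) := by
        rw [← hph (-r) hr'.le, e1]
      rw [e2] at h2
      -- h2 : f ⟨y,hy⟩ - h (y + r • z) ≤ (-r) • c
      rw [neg_smul, sub_le_iff_le_add'] at h2
      -- h2 : f ⟨y,hy⟩ ≤ h (y + r•z) + -(r • c)
      calc f ⟨y, hy⟩ + r • c ≤ (h (y + r • z) + -(r • c)) + r • c := by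
            exact add_le_add h2 le_rfl
      _ = h (y + r • z) := by abel
    · subst hr
      simp only [RingHom.id_apply, zero_smul, add_zero]
      exact (hf ⟨y, hy⟩).2
    · -- r > 0
      have h1 := hc_le (r⁻¹ • ⟨y, hy⟩)
      have h2 : r • c ≤ r • (h (↑(r⁻¹ • (⟨y, hy⟩ : f.domain)) + z) - f (r⁻¹ • (⟨y, hy⟩ : f.domain))) :=
        smul_le_smul_of_nonneg_left h1 hr.le
      rw [smul_sub, ← f.map_smul, smul_smul, mul_inv_cancel₀ hr.ne', one_smul] at h2
      have e1 : r • (↑(r⁻¹ • (⟨y, hy⟩ : f.domain)) + z) = y + r • z := by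
        push_cast
        rw [smul_add, smul_smul, mul_inv_cancel₀ hr.ne', one_smul]
      have e2 : r • h (↑(r⁻¹ • (⟨y, hy⟩ : f.domain)) + z) = h (y + r • z) := by
        rw [← hph r hr.le, e1]
      rw [e2] at h2
      -- h2 : r • c ≤ h (y + r • z) - f ⟨y,hy⟩
      rw [le_sub_iff_add_le'] at h2
      exact h2

theorem hb_exists (hrange : ∀ x, h x ∈ W) (hmono : Monotone h)
    (hsub : ∀ x y : V, h (x + y) ≤ h x + h y)
    (hph : ∀ a : ℝ, 0 ≤ a → ∀ x : V, h (a • x) = a • h x)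
    (hnorm : ∀ w ∈ W, h w = w)
    (p : V →ₗ.[ℝ] V)
    (hp : ∀ y : p.domain, p y ∈ W ∧ p y ≤ h y) :
    ∃ g : V →ₗ[ℝ] V, (∀ y : p.domain, g y = p y) ∧ (∀ v, g v ∈ W) ∧ (∀ v, g v ≤ h v) := by
  set S := { f : V →ₗ.[ℝ] V | ∀ y : f.domain, f y ∈ W ∧ f y ≤ h y } with hS
  have hSc : ∀ c, c ⊆ S → IsChain (· ≤ ·) c → ∀ y ∈ c, ∃ ub ∈ S, ∀ z ∈ c, z ≤ ub := by
    intro c hcs c_chain y hy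
    have cne : c.Nonempty := ⟨y, hy⟩
    have hcd : DirectedOn (· ≤ ·) c := c_chain.directedOn
    refine ⟨LinearPMap.sSup c hcd, ?_, fun _ ↦ LinearPMap.le_sSup hcd⟩
    rintro ⟨x, hx⟩
    have hdir : DirectedOn (· ≤ ·) (LinearPMap.domain '' c) :=
      directedOn_image.2 (hcd.mono LinearPMap.domain_mono.monotone)
    rcases (mem_sSup_of_directed (cne.image _) hdir).1 hx with ⟨_, ⟨f, hfc, rfl⟩, hfx⟩
    have hle : f ≤ LinearPMap.sSup c hcd := LinearPMap.le_sSup _ hfc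
    convert ← hcs hfc ⟨x, hfx⟩ using 2 <;> exact (hle.2 rfl)
  obtain ⟨q, hpq, hqmax⟩ := zorn_le_nonempty₀ S hSc p hp
  have hqS : q ∈ S := hqmax.prop
  have hqtop : q.domain = ⊤ := by
    by_contra hne
    obtain ⟨r, hqr, hr⟩ := hb_step_s3 W h hrange hmono hsub hph hnorm q hqS hne
    exact hqr.ne (hqmax.eq_of_le hr hqr.le)
  obtain ⟨g_dom, g⟩ := q
  simp only at hqtop
  subst hqtop
  refine ⟨g.comp (LinearMap.id.codRestrict ⊤ fun _ ↦ trivial), fun y => ?_, fun v => ?_, fun v => ?_⟩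
  · exact ((hpq.2 (x := y) (y := ⟨(y : V), trivial⟩) rfl)).symm
  · exact (hqS ⟨v, trivial⟩).1
  · exact (hqS ⟨v, trivial⟩).2

end HB


/-- If `h : V → V` maps into a Riesz subspace `W`, is monotone, sublinear and
`W`-normalized, then every linear map dominated by `h` fixes `W` pointwise, and `h x` is the
supremum of `ℓ x` over linear, positive, `W`-normalized maps into `W` dominated by `h`. -/
theorem stmt_3 {V : Type*} [ConditionallyCompleteLattice V] [AddCommGroup V] [Module ℝ V]
    [CovariantClass V V (· + ·) (· ≤ ·)] [PosSMulMono ℝ V]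
    (W : Submodule ℝ V) (hWlat : ∀ x ∈ W, ∀ y ∈ W, x ⊔ y ∈ W)
    (h : V → V) (hrange : ∀ x, h x ∈ W)
    (hmono : Monotone h)
    (hsub : ∀ x y : V, h (x + y) ≤ h x + h y)
    (hph : ∀ a : ℝ, 0 ≤ a → ∀ x : V, h (a • x) = a • h x)
    (hnorm : ∀ w ∈ W, h w = w) :
    (∀ ℓ : V →ₗ[ℝ] V, (∀ v, ℓ v ≤ h v) → ∀ w ∈ W, ℓ w = w) ∧
    ∀ x : V, IsLUB {y : V | ∃ ℓ : V →ₗ[ℝ] V, (∀ v, ℓ v ∈ W) ∧ (∀ v, ℓ v ≤ h v) ∧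
        (∀ v : V, 0 ≤ v → 0 ≤ ℓ v) ∧ (∀ w ∈ W, ℓ w = w) ∧ ℓ x = y} (h x) := by
  have h0 : h 0 = 0 := by simpa using hph 0 le_rfl 0
  have part1 : ∀ ℓ : V →ₗ[ℝ] V, (∀ v, ℓ v ≤ h v) → ∀ w ∈ W, ℓ w = w := by
    intro ℓ hl w hw
    have h1 : ℓ w ≤ w := by simpa [hnorm w hw] using hl w
    have h2 : ℓ (-w) ≤ -w := by simpa [hnorm (-w) (W.neg_mem hw)] using hl (-w)
    rw [map_neg, neg_le_neg_iff] at h2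
    exact le_antisymm h1 h2
  refine ⟨part1, fun x => ?_⟩
  constructor
  · rintro y ⟨ℓ, -, hlh, -, -, rfl⟩
    exact hlh x
  · intro b hb
    obtain ⟨g, hgx, hgW, hgh⟩ : ∃ g : V →ₗ[ℝ] V, g x = h x ∧ (∀ v, g v ∈ W) ∧ (∀ v, g v ≤ h v) := by
      by_cases hx0 : x = 0
      · obtain ⟨g, -, hgW, hgh⟩ := hb_exists W h hrange hmono hsub hph hnorm
          ((0 : V →ₗ[ℝ] V).toPMap ⊥) (by
            rintro ⟨v, hv⟩
            have hv0 : v = (0 : V) := by simpa using hv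
            simp [LinearMap.toPMap_apply, hv0, h0, W.zero_mem])
        refine ⟨g, ?_, hgW, hgh⟩
        rw [hx0, map_zero, h0]
      · set p := (LinearPMap.mkSpanSingleton (K := ℝ) x (h x) hx0 : V →ₗ.[ℝ] V) with hp
        have hpdom : ∀ y : p.domain, p y ∈ W ∧ p y ≤ h y := by
          rintro ⟨v, hv⟩
          rcases mem_span_singleton.1 hv with ⟨c, rfl⟩
          rw [LinearPMap.mkSpanSingleton'_apply, RingHom.id_apply]
          refine ⟨W.smul_mem _ (hrange x), ?_⟩
          rcases le_or_gt 0 c with hc | hc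
          · rw [hph c hc]
          · have h1 : h (c • x + (-c) • x) ≤ h (c • x) + h ((-c) • x) := hsub _ _
            have e : c • x + (-c) • x = (0 : V) := by rw [neg_smul]; abel
            rw [e, h0, hph (-c) (by linarith) x, neg_smul] at h1
            exact sub_nonneg.1 (by rwa [sub_eq_add_neg])
        obtain ⟨g, hgp, hgW, hgh⟩ := hb_exists W h hrange hmono hsub hph hnorm p hpdom
        exact ⟨g, (hgp ⟨x, mem_span_singleton_self x⟩).trans
          (LinearPMap.mkSpanSingleton_apply ℝ ℝ hx0 (h x)), hgW, hgh⟩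
    have hpos : ∀ v : V, 0 ≤ v → 0 ≤ g v := by
      intro v hv
      have h1 : g (-v) ≤ h (-v) := hgh (-v)
      have h2 : h (-v) ≤ h 0 := hmono (neg_nonpos.2 hv)
      rw [map_neg, h0] at *
      have h3 : -g v ≤ 0 := by rw [← h0]; exact h1.trans h2
      exact neg_nonpos.1 h3
    exact hb ⟨g, hgW, hgh, hpos, part1 g hgh, hgx⟩
end

section
/- Let (Ω,F,ℙ) be a probability space, G ⊆ F a sub-σ-algebra, and h : L¹(F) → L¹(G) a monotone, sublinear, G-normalized map that is continuous from above. Then every linear, monotone, G-normalized, continuous-from-below map ℓ : L¹(F) → L¹(G) with ℓ ≤ h is of the form ℓ(X) = E^Q[X | G] for a probability measure Q on (Ω,F) with Q ≪ ℙ and Q restricted to G equal to ℙ restricted to G. -/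
open MeasureTheory Filter Set

section Aux
variable {Ω : Type*} [F : MeasurableSpace Ω] {ℙ : Measure Ω}

lemma coeFn_finset_sum {ι : Type*} (s : Finset ι) (f : ι → Lp ℝ 1 ℙ) :
    ⇑(∑ i ∈ s, f i) =ᵐ[ℙ] fun x => ∑ i ∈ s, f i x := by
  classical
  induction s using Finset.induction_on with
  | empty =>
      simp only [Finset.sum_empty]
      have h0 := Lp.coeFn_zero ℝ 1 ℙ
      filter_upwards [h0] with x hx
      simpa using hx
  | @insert a s hni ih =>
      rw [Finset.sum_insert hni]
      have hadd := Lp.coeFn_add (f a) (∑ i ∈ s, f i)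
      filter_upwards [hadd, ih] with x hx hx2
      rw [Finset.sum_insert hni]
      simp only [hx, Pi.add_apply, hx2]

lemma lub_ae_tendsto (f : ℕ → Lp ℝ 1 ℙ) (Fl : Lp ℝ 1 ℙ) (hmono : Monotone f)
    (hlub : IsLUB (Set.range f) Fl) :
    ∀ᵐ x ∂ℙ, Tendsto (fun n => f n x) atTop (nhds (Fl x)) := by
  have hub : ∀ n, f n ≤ Fl := fun n => hlub.1 ⟨n, rfl⟩
  have hle : ∀ᵐ x ∂ℙ, ∀ n, f n x ≤ Fl x :=
    ae_all_iff.2 fun n => (Lp.coeFn_le _ _).2 (hub n)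
  have hmx : ∀ᵐ x ∂ℙ, ∀ n, f n x ≤ f (n + 1) x :=
    ae_all_iff.2 fun n => (Lp.coeFn_le _ _).2 (hmono (Nat.le_succ n))
  set g : Ω → ℝ := fun x => ⨆ n, f n x with hg
  have hgmeas : Measurable g :=
    Measurable.iSup fun n => (Lp.stronglyMeasurable (f n)).measurable
  have key : ∀ᵐ x ∂ℙ, (∀ n, f n x ≤ g x) ∧ g x ≤ Fl x ∧
      Tendsto (fun n => f n x) atTop (nhds (g x)) := by
    filter_upwards [hle, hmx] with x h1 h2
    have hm : Monotone fun n => f n x := monotone_nat_of_le_succ h2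
    have hbdd : BddAbove (Set.range fun n => f n x) :=
      ⟨Fl x, by rintro _ ⟨n, rfl⟩; exact h1 n⟩
    exact ⟨fun n => le_ciSup hbdd n, ciSup_le h1, tendsto_atTop_ciSup hm hbdd⟩
  have hgi : Integrable g ℙ := by
    refine Integrable.mono'
      ((L1.integrable_coeFn (f 0)).abs.add (L1.integrable_coeFn Fl).abs)
      hgmeas.aestronglyMeasurable ?_
    filter_upwards [key] with x hx
    obtain ⟨h1, h2, _⟩ := hx
    have h0 := h1 0
    have a1 : -|f 0 x| ≤ f 0 x := neg_abs_le _
    have a2 : Fl x ≤ |Fl x| := le_abs_self _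
    simp only [Pi.add_apply, Real.norm_eq_abs, abs_le]
    constructor <;> [linarith [abs_nonneg ((Fl : Ω → ℝ) x)]; linarith [abs_nonneg ((f 0 : Ω → ℝ) x)]]
  set W : Lp ℝ 1 ℙ := hgi.toL1 g with hW
  have hWub : W ∈ upperBounds (Set.range f) := by
    rintro _ ⟨n, rfl⟩
    rw [← Lp.coeFn_le]
    filter_upwards [key, hgi.coeFn_toL1] with x hx hw
    rw [hw]; exact hx.1 n
  have hFlW : Fl ≤ W := hlub.2 hWub
  have hFlg : ∀ᵐ x ∂ℙ, Fl x ≤ g x := by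
    have := (Lp.coeFn_le _ _).2 hFlW
    filter_upwards [this, hgi.coeFn_toL1] with x hx hw
    rwa [hw] at hx
  filter_upwards [key, hFlg] with x hx hx2
  obtain ⟨_, h2, h3⟩ := hx
  have : g x = Fl x := le_antisymm h2 hx2
  rwa [this] at h3

lemma lub_integral_tendsto (f : ℕ → Lp ℝ 1 ℙ) (Fl : Lp ℝ 1 ℙ) (hmono : Monotone f)
    (hlub : IsLUB (Set.range f) Fl) :
    Tendsto (fun n => ∫ x, f n x ∂ℙ) atTop (nhds (∫ x, Fl x ∂ℙ)) := by
  refine integral_tendsto_of_tendsto_of_monotone (fun n => L1.integrable_coeFn _)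
    (L1.integrable_coeFn _) ?_ (lub_ae_tendsto f Fl hmono hlub)
  have hmx : ∀ᵐ x ∂ℙ, ∀ n, f n x ≤ f (n + 1) x :=
    ae_all_iff.2 fun n => (Lp.coeFn_le _ _).2 (hmono (Nat.le_succ n))
  filter_upwards [hmx] with x hx
  exact monotone_nat_of_le_succ hx

lemma step_count (t c ε : ℝ) (ht0 : 0 ≤ t) (htc : t ≤ c) (hε : 0 < ε) :
    t - ε ≤ ε * ∑ k ∈ Finset.Icc 1 (Nat.ceil (c / ε)), (if (k : ℝ) * ε ≤ t then (1:ℝ) else 0) ∧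
    ε * ∑ k ∈ Finset.Icc 1 (Nat.ceil (c / ε)), (if (k : ℝ) * ε ≤ t then (1:ℝ) else 0) ≤ t := by
  classical
  set K := Nat.ceil (c / ε) with hK
  set m := Nat.floor (t / ε) with hm
  have hdiv0 : 0 ≤ t / ε := div_nonneg ht0 hε.le
  have hmK : m ≤ K := le_trans (Nat.floor_mono (by gcongr)) (Nat.floor_le_ceil _)
  have hcond : ∀ k : ℕ, ((k : ℝ) * ε ≤ t) ↔ (k ≤ m) := by
    intro k
    rw [hm, Nat.le_floor_iff hdiv0, le_div_iff₀ hε]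
  have hsum : ∑ k ∈ Finset.Icc 1 K, (if (k : ℝ) * ε ≤ t then (1:ℝ) else 0) = (m : ℝ) := by
    rw [Finset.sum_congr rfl fun k _ => if_congr (hcond k) rfl rfl]
    rw [Finset.sum_boole]
    congr 1
    have : (Finset.Icc 1 K).filter (fun k => k ≤ m) = Finset.Icc 1 m := by
      ext k; simp only [Finset.mem_filter, Finset.mem_Icc]; omega
    rw [this, Nat.card_Icc]
    omega
  rw [hsum]
  constructor
  · have := Nat.lt_floor_add_one (t / ε)
    rw [div_lt_iff₀ hε] at this
    nlinarith
  · have := Nat.floor_le hdiv0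
    rw [← hm] at this
    calc ε * (m : ℝ) ≤ ε * (t / ε) := by gcongr
    _ = t := by field_simp

end Aux


set_option maxHeartbeats 1600000

/-- In the setting of a probability space `(Ω, F, ℙ)` with sub-σ-algebra `G`,
if `h : L¹(F) → L¹(G)` is monotone, sublinear, `G`-normalized and continuous from above,
then every linear, monotone, `G`-normalized, continuous-from-below map `ℓ ≤ h` (with
values in `L¹(G)`) is a conditional expectation `E^Q[· | G]` for some probability measure
`Q ≪ ℙ` agreeing with `ℙ` on `G`. -/
theorem stmt_9 {Ω : Type*} [F : MeasurableSpace Ω] (ℙ : Measure Ω)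
    [IsProbabilityMeasure ℙ] (G : MeasurableSpace Ω) (hG : G ≤ F)
    (h : Lp ℝ 1 ℙ → Lp ℝ 1 ℙ)
    -- h maps into L¹(G):
    (hmeas : ∀ X : Lp ℝ 1 ℙ, ∃ g : Ω → ℝ, Measurable[G] g ∧ (h X : Ω → ℝ) =ᵐ[ℙ] g)
    (hmono : Monotone h)
    (hsub : ∀ X Y : Lp ℝ 1 ℙ, h (X + Y) ≤ h X + h Y)
    (hph : ∀ a : ℝ, 0 ≤ a → ∀ X, h (a • X) = a • h X)
    (hnorm : ∀ X : Lp ℝ 1 ℙ, (∃ g : Ω → ℝ, Measurable[G] g ∧ (X : Ω → ℝ) =ᵐ[ℙ] g) →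
      h X = X)
    (hca : ∀ (X : ℕ → Lp ℝ 1 ℙ) (X' Y : Lp ℝ 1 ℙ), Antitone X →
      (∀ m, |X m| ≤ Y) → IsGLB (Set.range X) X' →
      (Antitone fun m => h (X m)) ∧ IsGLB (Set.range fun m => h (X m)) (h X'))
    (ℓ : Lp ℝ 1 ℙ →ₗ[ℝ] Lp ℝ 1 ℙ)
    (hℓmeas : ∀ X : Lp ℝ 1 ℙ, ∃ g : Ω → ℝ, Measurable[G] g ∧ (ℓ X : Ω → ℝ) =ᵐ[ℙ] g)
    (hℓmono : ∀ X Y : Lp ℝ 1 ℙ, X ≤ Y → ℓ X ≤ ℓ Y)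
    (hℓnorm : ∀ X : Lp ℝ 1 ℙ, (∃ g : Ω → ℝ, Measurable[G] g ∧ (X : Ω → ℝ) =ᵐ[ℙ] g) →
      ℓ X = X)
    (hℓcb : ∀ (X : ℕ → Lp ℝ 1 ℙ) (X' Y : Lp ℝ 1 ℙ), Monotone X →
      (∀ m, |X m| ≤ Y) → IsLUB (Set.range X) X' →
      IsLUB (Set.range fun m => ℓ (X m)) (ℓ X'))
    (hdom : ∀ X : Lp ℝ 1 ℙ, ℓ X ≤ h X) :
    ∃ Q : @Measure Ω F, IsProbabilityMeasure Q ∧ Q ≪ ℙ ∧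
      (∀ s : Set Ω, MeasurableSet[G] s → Q s = ℙ s) ∧
      ∀ X : Lp ℝ 1 ℙ, (ℓ X : Ω → ℝ) =ᵐ[ℙ] Q[(X : Ω → ℝ) | G] := by
  classical
  letI : MeasurableSpace Ω := F
  clear hmeas hsub hph hca
  -- basic facts about ℓ
  have hl0 : ℓ 0 = 0 := map_zero ℓ
  have hlpos : ∀ X : Lp ℝ 1 ℙ, 0 ≤ X → 0 ≤ ℓ X := fun X hX => by
    have := hℓmono 0 X hX; rwa [hl0] at this
  have hle_ae : ∀ Z W : Lp ℝ 1 ℙ, Z ≤ W → ∀ᵐ x ∂ℙ, Z x ≤ W x := fun Z W h =>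
    (Lp.coeFn_le Z W).2 h
  have hnn : ∀ Z : Lp ℝ 1 ℙ, 0 ≤ Z → ∀ᵐ x ∂ℙ, 0 ≤ Z x := by
    intro Z hZ
    have h1 := hle_ae 0 Z hZ
    have h0 := Lp.coeFn_zero ℝ 1 ℙ
    filter_upwards [h1, h0] with x hx h0x
    rw [h0x] at hx; exact hx
  have hint : ∀ Z : Lp ℝ 1 ℙ, Integrable (Z : Ω → ℝ) ℙ := fun Z => L1.integrable_coeFn Z
  -- indicator Lp elements
  set e : ∀ A : Set Ω, MeasurableSet[F] A → Lp ℝ 1 ℙ := fun A hA =>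
    indicatorConstLp 1 hA (measure_ne_top ℙ A) (1 : ℝ) with he_def
  have he : ∀ (A : Set Ω) (hA : MeasurableSet[F] A),
      ⇑(e A hA) =ᵐ[ℙ] A.indicator (fun _ => (1:ℝ)) := fun A hA => indicatorConstLp_coeFn
  have he0 : ∀ (A : Set Ω) (hA : MeasurableSet[F] A), 0 ≤ e A hA := by
    intro A hA
    rw [← Lp.coeFn_le]
    have h0 := Lp.coeFn_zero ℝ 1 ℙ
    filter_upwards [he A hA, h0] with x hx h0x
    rw [hx, h0x]
    exact Set.indicator_nonneg (fun _ _ => zero_le_one) x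
  have hq0 : ∀ (A : Set Ω) (hA : MeasurableSet[F] A), 0 ≤ ∫ x, (ℓ (e A hA) : Ω → ℝ) x ∂ℙ :=
    fun A hA => integral_nonneg_of_ae (hnn _ (hlpos _ (he0 A hA)))
  -- the constant-one element
  set one : Lp ℝ 1 ℙ := e Set.univ MeasurableSet.univ with hone_def
  have hone : ⇑one =ᵐ[ℙ] fun _ => (1:ℝ) :=
    (he _ _).trans (Filter.Eventually.of_forall fun x => by simp)
  have hℓone : ℓ one = one := hℓnorm one ⟨fun _ => (1:ℝ), measurable_const, hone⟩
  have hIone : ∫ x, (one : Ω → ℝ) x ∂ℙ = 1 := by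
    rw [integral_congr_ae hone]; simp
  -- countable additivity data
  have hm0 : ENNReal.ofReal (∫ x, (ℓ (e ∅ MeasurableSet.empty) : Ω → ℝ) x ∂ℙ) = 0 := by
    have hz : e ∅ MeasurableSet.empty = 0 := by
      apply Lp.ext
      have h0 := Lp.coeFn_zero ℝ 1 ℙ
      filter_upwards [he ∅ MeasurableSet.empty, h0] with x hx h0x
      rw [hx, h0x]; simp
    rw [hz, hl0]
    have h0 := Lp.coeFn_zero ℝ 1 ℙ
    rw [integral_congr_ae h0]
    simp
  have hmU : ∀ ⦃A : ℕ → Set Ω⦄ (hA : ∀ i, MeasurableSet[F] (A i)), Pairwise (Function.onFun Disjoint A) →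
      ENNReal.ofReal (∫ x, (ℓ (e (⋃ i, A i) (MeasurableSet.iUnion hA)) : Ω → ℝ) x ∂ℙ) =
        ∑' i, ENNReal.ofReal (∫ x, (ℓ (e (A i) (hA i)) : Ω → ℝ) x ∂ℙ) := by
    intro A hA hdisj
    set U : Set Ω := ⋃ i, A i with hU_def
    have hU : MeasurableSet[F] U := MeasurableSet.iUnion hA
    set S : ℕ → Lp ℝ 1 ℙ := fun n => ∑ k ∈ Finset.range n, e (A k) (hA k) with hS
    have hScoe : ∀ n, ⇑(S n) =ᵐ[ℙ]
        fun x => ∑ k ∈ Finset.range n, (A k).indicator (fun _ => (1:ℝ)) x := by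
      intro n
      refine (coeFn_finset_sum _ _).trans ?_
      have hall := ae_all_iff.2 (fun k : ℕ => he (A k) (hA k))
      filter_upwards [hall] with x hx
      exact Finset.sum_congr rfl fun k _ => hx k
    -- pointwise bounds
    have hcard : ∀ (n : ℕ) (x : Ω),
        (∑ k ∈ Finset.range n, (A k).indicator (fun _ => (1:ℝ)) x) =
          (((Finset.range n).filter (fun k => x ∈ A k)).card : ℝ) := by
      intro n x
      rw [← Finset.sum_boole]
      exact Finset.sum_congr rfl fun k _ => by rw [Set.indicator_apply]
    have hcard1 : ∀ (n : ℕ) (x : Ω), (((Finset.range n).filter (fun k => x ∈ A k)).card) ≤ 1 := by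
      intro n x
      refine Finset.card_le_one.2 fun a ha b hb => ?_
      simp only [Finset.mem_filter] at ha hb
      by_contra hne
      exact Set.disjoint_left.1 (hdisj hne) ha.2 hb.2
    have hbnd : ∀ (n : ℕ) (x : Ω),
        (∑ k ∈ Finset.range n, (A k).indicator (fun _ => (1:ℝ)) x) ≤
          U.indicator (fun _ => (1:ℝ)) x := by
      intro n x
      by_cases hx : x ∈ U
      · rw [Set.indicator_of_mem hx, hcard]
        exact_mod_cast hcard1 n x
      · rw [Set.indicator_of_notMem hx]
        rw [hcard]
        have : ((Finset.range n).filter (fun k => x ∈ A k)) = ∅ := by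
          refine Finset.filter_false_of_mem fun k _ hk => hx (Set.mem_iUnion.2 ⟨k, hk⟩)
        simp [this]
    have hnonneg_sum : ∀ (n : ℕ) (x : Ω),
        0 ≤ ∑ k ∈ Finset.range n, (A k).indicator (fun _ => (1:ℝ)) x :=
      fun n x => Finset.sum_nonneg fun k _ => Set.indicator_nonneg (fun _ _ => zero_le_one) x
    have hSmono : Monotone S := by
      refine monotone_nat_of_le_succ fun n => ?_
      rw [hS]
      simp only
      rw [Finset.sum_range_succ]
      exact le_add_of_nonneg_right (he0 _ _)
    have hUb : ∀ n, |S n| ≤ e U hU := by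
      intro n
      rw [← Lp.coeFn_le]
      filter_upwards [Lp.coeFn_abs (S n), hScoe n, he U hU] with x h1 h2 h3
      rw [h1, h2, h3, abs_of_nonneg (hnonneg_sum n x)]
      exact hbnd n x
    have hlub : IsLUB (Set.range S) (e U hU) := by
      constructor
      · rintro _ ⟨n, rfl⟩
        rw [← Lp.coeFn_le]
        filter_upwards [hScoe n, he U hU] with x h1 h2
        rw [h1, h2]
        exact hbnd n x
      · intro W hW
        have hWall : ∀ᵐ x ∂ℙ, ∀ n : ℕ,
            (∑ k ∈ Finset.range n, (A k).indicator (fun _ => (1:ℝ)) x) ≤ W x := by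
          rw [ae_all_iff]
          intro n
          have h1 := hle_ae _ _ (hW ⟨n, rfl⟩)
          filter_upwards [h1, hScoe n] with x hx h2
          rw [← h2]; exact hx
        rw [← Lp.coeFn_le]
        filter_upwards [hWall, he U hU] with x h1 h2
        rw [h2]
        by_cases hx : x ∈ U
        · rw [Set.indicator_of_mem hx]
          obtain ⟨k, hk⟩ := Set.mem_iUnion.1 hx
          refine le_trans ?_ (h1 (k + 1))
          have hone' : (A k).indicator (fun _ => (1:ℝ)) x = 1 := Set.indicator_of_mem hk _
          calc (1:ℝ) = (A k).indicator (fun _ => (1:ℝ)) x := hone'.symm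
            _ ≤ ∑ j ∈ Finset.range (k+1), (A j).indicator (fun _ => (1:ℝ)) x :=
              Finset.single_le_sum (fun j _ => Set.indicator_nonneg (fun _ _ => zero_le_one) x)
                (Finset.self_mem_range_succ k)
        · rw [Set.indicator_of_notMem hx]
          have := h1 0
          simpa using this
    have hIS : ∀ n, ∫ x, (ℓ (S n) : Ω → ℝ) x ∂ℙ =
        ∑ k ∈ Finset.range n, ∫ x, (ℓ (e (A k) (hA k)) : Ω → ℝ) x ∂ℙ := by
      intro n
      have hmap : ℓ (S n) = ∑ k ∈ Finset.range n, ℓ (e (A k) (hA k)) := by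
        rw [hS]; exact map_sum ℓ _ _
      rw [hmap, integral_congr_ae (coeFn_finset_sum _ _)]
      exact integral_finset_sum _ fun k _ => hint _
    have htend := lub_integral_tendsto (fun n => ℓ (S n)) (ℓ (e U hU))
      (fun a b hab => hℓmono _ _ (hSmono hab)) (hℓcb S (e U hU) (e U hU) hSmono hUb hlub)
    have hhs : HasSum (fun k => ∫ x, (ℓ (e (A k) (hA k)) : Ω → ℝ) x ∂ℙ)
        (∫ x, (ℓ (e U hU) : Ω → ℝ) x ∂ℙ) := by
      rw [hasSum_iff_tendsto_nat_of_nonneg (fun k => hq0 _ _)]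
      exact Filter.Tendsto.congr (fun n => hIS n) htend
    rw [← hhs.tsum_eq, ENNReal.ofReal_tsum_of_nonneg (fun k => hq0 _ _) hhs.summable]
  -- the measure Q
  set Q : Measure Ω := Measure.ofMeasurable
    (fun A hA => ENNReal.ofReal (∫ x, (ℓ (e A hA) : Ω → ℝ) x ∂ℙ)) hm0 hmU with hQdef
  have hQapp : ∀ (A : Set Ω) (hA : MeasurableSet[F] A),
      Q A = ENNReal.ofReal (∫ x, (ℓ (e A hA) : Ω → ℝ) x ∂ℙ) := fun A hA =>
    Measure.ofMeasurable_apply A hA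
  have hac : Q ≪ ℙ := by
    refine Measure.AbsolutelyContinuous.mk fun s hs h0 => ?_
    have hz : e s hs = 0 := by
      apply Lp.ext
      have h0' := Lp.coeFn_zero ℝ 1 ℙ
      filter_upwards [he s hs, h0', measure_eq_zero_iff_ae_notMem.1 h0] with x h1 h2 h3
      rw [h1, h2, Set.indicator_of_notMem h3]; simp
    rw [hQapp s hs, hz, hl0]
    have h0' := Lp.coeFn_zero ℝ 1 ℙ
    rw [integral_congr_ae h0']
    simp
  have haeQ : ∀ {f g : Ω → ℝ}, f =ᵐ[ℙ] g → f =ᵐ[Q] g := fun h => hac.ae_le h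
  have hQuniv : Q Set.univ = 1 := by
    rw [hQapp _ MeasurableSet.univ]
    have : e Set.univ MeasurableSet.univ = one := rfl
    rw [this, hℓone, hIone]
    simp
  haveI hQprob : IsProbabilityMeasure Q := ⟨hQuniv⟩
  have hQG : ∀ s : Set Ω, MeasurableSet[G] s → Q s = ℙ s := by
    intro s hs
    have hsF : MeasurableSet[F] s := hG s hs
    have hnorm' : ℓ (e s hsF) = e s hsF :=
      hℓnorm _ ⟨s.indicator (fun _ => (1:ℝ)),
        (@measurable_const ℝ Ω _ G 1).indicator hs, he s hsF⟩
    rw [hQapp s hsF, hnorm', integral_congr_ae (he s hsF),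
      integral_indicator_const (1:ℝ) hsF]
    simp [ENNReal.ofReal_toReal (measure_ne_top ℙ s)]
  
  have haeQ' : ∀ {p : Ω → Prop}, (∀ᵐ x ∂ℙ, p x) → (∀ᵐ x ∂Q, p x) :=
    fun h => h.filter_mono hac.ae_le
  -- bounded integral identity
  have hbdd : ∀ (X : Lp ℝ 1 ℙ) (c : ℝ), 0 ≤ X → (∀ᵐ x ∂ℙ, (X : Ω → ℝ) x ≤ c) →
      ∫ x, (X : Ω → ℝ) x ∂Q = ∫ x, (ℓ X : Ω → ℝ) x ∂ℙ := by
    intro X c hX0 hXc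
    have hXmeas : StronglyMeasurable (X : Ω → ℝ) := Lp.stronglyMeasurable X
    have hX0ae : ∀ᵐ x ∂ℙ, 0 ≤ (X : Ω → ℝ) x := hnn X hX0
    have hXQint : Integrable (X : Ω → ℝ) Q := by
      refine Integrable.mono' (integrable_const (max c 0)) hXmeas.aestronglyMeasurable ?_
      refine haeQ' ?_
      filter_upwards [hXc, hX0ae] with x h1 h2
      rw [Real.norm_eq_abs, abs_of_nonneg h2]
      exact h1.trans (le_max_left _ _)
    have hc0 : 0 ≤ c := by
      by_contra hc
      push_neg at hc
      have hfalse : ∀ᵐ _x ∂ℙ, False := by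
        filter_upwards [hXc, hX0ae] with x h1 h2; linarith
      haveI : (ae ℙ).NeBot := MeasureTheory.ae_neBot.2 (IsProbabilityMeasure.ne_zero ℙ)
      obtain ⟨x, hx⟩ := hfalse.exists
      exact hx
    have hkey : ∀ ε : ℝ, 0 < ε →
        |∫ x, (X : Ω → ℝ) x ∂Q - ∫ x, (ℓ X : Ω → ℝ) x ∂ℙ| ≤ ε := by
      intro ε hε
      set K := Nat.ceil (c / ε) with hK
      set B : ℕ → Set Ω := fun k => {x | (k : ℝ) * ε ≤ (X : Ω → ℝ) x} with hB
      have hBmeas : ∀ k, MeasurableSet[F] (B k) := fun k =>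
        measurableSet_le measurable_const hXmeas.measurable
      set Sf : Lp ℝ 1 ℙ := ∑ k ∈ Finset.Icc 1 K, ε • e (B k) (hBmeas k) with hSf
      -- indicator representation
      have hSfind : ⇑Sf =ᵐ[ℙ]
          fun x => ∑ k ∈ Finset.Icc 1 K, ε * (B k).indicator (fun _ => (1:ℝ)) x := by
        refine (coeFn_finset_sum _ _).trans ?_
        have hsm : ∀ᵐ x ∂ℙ, ∀ k : ℕ,
            (ε • e (B k) (hBmeas k) : Lp ℝ 1 ℙ) x = ε * (B k).indicator (fun _ => (1:ℝ)) x := by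
          rw [ae_all_iff]
          intro k
          filter_upwards [Lp.coeFn_smul ε (e (B k) (hBmeas k)), he (B k) (hBmeas k)]
            with x h1 h2
          rw [h1, Pi.smul_apply, h2, smul_eq_mul]
        filter_upwards [hsm] with x hx
        exact Finset.sum_congr rfl fun k _ => hx k
      have hSfcoe : ⇑Sf =ᵐ[ℙ]
          fun x => ε * ∑ k ∈ Finset.Icc 1 K, (if (k : ℝ) * ε ≤ (X : Ω → ℝ) x then (1:ℝ) else 0) := by
        refine hSfind.trans (Filter.Eventually.of_forall fun x => ?_)
        show (∑ k ∈ Finset.Icc 1 K, ε * (B k).indicator (fun _ => (1:ℝ)) x)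
          = ε * ∑ k ∈ Finset.Icc 1 K, (if (k : ℝ) * ε ≤ (X : Ω → ℝ) x then (1:ℝ) else 0)
        rw [Finset.mul_sum]
        refine Finset.sum_congr rfl fun k _ => ?_
        rw [Set.indicator_apply]
        simp only [hB, Set.mem_setOf_eq]
      have hsand : ∀ᵐ x ∂ℙ, Sf x ≤ (X : Ω → ℝ) x ∧ (X : Ω → ℝ) x ≤ Sf x + ε := by
        filter_upwards [hSfcoe, hX0ae, hXc] with x h1 h2 h3
        obtain ⟨ha, hb⟩ := step_count ((X : Ω → ℝ) x) c ε h2 h3 hε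
        rw [h1]
        exact ⟨hb, by linarith⟩
      have hS_le_X : Sf ≤ X := (Lp.coeFn_le _ _).1 <| by
        filter_upwards [hsand] with x hx; exact hx.1
      have hX_le : X ≤ Sf + ε • one := by
        rw [← Lp.coeFn_le]
        filter_upwards [hsand, Lp.coeFn_add Sf (ε • one), Lp.coeFn_smul ε one, hone]
          with x h1 h2 h3 h4
        rw [h2, Pi.add_apply, h3, Pi.smul_apply, h4, smul_eq_mul, mul_one]
        exact h1.2
      have hεone : ℓ (ε • one) = ε • one := by rw [LinearMap.map_smul, hℓone]
      have hl1 : ℓ Sf ≤ ℓ X := hℓmono _ _ hS_le_X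
      have hl2 : ℓ X ≤ ℓ Sf + ε • one := by
        have := hℓmono _ _ hX_le
        rwa [map_add, hεone] at this
      -- integrals over ℙ of ℓ-side
      have hIεone : ∫ x, (ε • one : Lp ℝ 1 ℙ) x ∂ℙ = ε := by
        rw [integral_congr_ae ((Lp.coeFn_smul ε one).trans (hone.mono fun x hx => by
          rw [Pi.smul_apply, hx, smul_eq_mul, mul_one]))]
        simp
      have hIl1 : ∫ x, (ℓ Sf : Ω → ℝ) x ∂ℙ ≤ ∫ x, (ℓ X : Ω → ℝ) x ∂ℙ :=
        integral_mono_ae (hint _) (hint _) (hle_ae _ _ hl1)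
      have hIl2 : ∫ x, (ℓ X : Ω → ℝ) x ∂ℙ ≤ ∫ x, (ℓ Sf : Ω → ℝ) x ∂ℙ + ε := by
        have h1 : ∫ x, (ℓ Sf + ε • one : Lp ℝ 1 ℙ) x ∂ℙ
            = ∫ x, (ℓ Sf : Ω → ℝ) x ∂ℙ + ε := by
          rw [integral_congr_ae (Lp.coeFn_add (ℓ Sf) (ε • one))]
          simp only [Pi.add_apply]
          rw [integral_add (hint _) (hint _), hIεone]
        rw [← h1]
        exact integral_mono_ae (hint _) (hint _) (hle_ae _ _ hl2)
      -- the indicator-sum function and its Q-integral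
      set sfun : Ω → ℝ := fun x => ∑ k ∈ Finset.Icc 1 K, ε * (B k).indicator (fun _ => (1:ℝ)) x
        with hsfun
      have hsfun_int : Integrable sfun Q := by
        refine integrable_finset_sum _ fun k _ => ?_
        exact ((integrable_const (1:ℝ)).indicator (hBmeas k)).const_mul ε
      have hSfQint : Integrable (⇑Sf) Q := hsfun_int.congr (haeQ hSfind).symm
      have hsfunQ : ∫ x, Sf x ∂Q = ∫ x, (ℓ Sf : Ω → ℝ) x ∂ℙ := by
        rw [integral_congr_ae (haeQ hSfind)]
        rw [integral_finset_sum _ fun k _ => ((integrable_const (1:ℝ)).indicator (hBmeas k)).const_mul ε]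
        have hqside : ∀ k ∈ Finset.Icc 1 K,
            ∫ x, ε * (B k).indicator (fun _ => (1:ℝ)) x ∂Q
              = ε * ∫ x, (ℓ (e (B k) (hBmeas k)) : Ω → ℝ) x ∂ℙ := by
          intro k _
          rw [integral_const_mul, integral_indicator_const (1:ℝ) (hBmeas k),
            measureReal_def, hQapp _ (hBmeas k), ENNReal.toReal_ofReal (hq0 _ _), smul_eq_mul, mul_one]
        rw [Finset.sum_congr rfl hqside]
        -- now the ℙ side
        have hmap : ℓ Sf = ∑ k ∈ Finset.Icc 1 K, ε • ℓ (e (B k) (hBmeas k)) := by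
          rw [hSf, map_sum]
          exact Finset.sum_congr rfl fun k _ => LinearMap.map_smul ℓ ε _
        rw [hmap, integral_congr_ae (coeFn_finset_sum _ _),
          integral_finset_sum _ fun k _ => hint _]
        refine Finset.sum_congr rfl fun k _ => ?_
        rw [integral_congr_ae (Lp.coeFn_smul ε (ℓ (e (B k) (hBmeas k))))]
        simp only [Pi.smul_apply, smul_eq_mul]
        rw [integral_const_mul]
      have hQ1 : ∫ x, Sf x ∂Q ≤ ∫ x, (X : Ω → ℝ) x ∂Q :=
        integral_mono_ae hSfQint hXQint
          (haeQ' (by filter_upwards [hsand] with x hx; exact hx.1))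
      have hQ2 : ∫ x, (X : Ω → ℝ) x ∂Q ≤ ∫ x, Sf x ∂Q + ε := by
        have h2 : ∫ x, (Sf x + ε) ∂Q = ∫ x, Sf x ∂Q + ε := by
          rw [integral_add hSfQint (integrable_const ε)]; simp
        rw [← h2]
        exact integral_mono_ae hXQint (hSfQint.add (integrable_const ε))
          (haeQ' (by filter_upwards [hsand] with x hx; exact hx.2))
      rw [abs_le]
      constructor <;> linarith [hsfunQ, hQ1, hQ2, hIl1, hIl2]
    by_contra hne
    have habs : 0 < |∫ x, (X : Ω → ℝ) x ∂Q - ∫ x, (ℓ X : Ω → ℝ) x ∂ℙ| :=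
      abs_pos.2 (sub_ne_zero.2 hne)
    have := hkey (|∫ x, (X : Ω → ℝ) x ∂Q - ∫ x, (ℓ X : Ω → ℝ) x ∂ℙ| / 2) (by positivity)
    linarith
  
  -- truncation facts (for a nonneg X)
  have hzero_le_smul_one : ∀ n : ℕ, (0 : Lp ℝ 1 ℙ) ≤ (n : ℝ) • one := by
    intro n
    rw [← Lp.coeFn_le]
    have h0 := Lp.coeFn_zero ℝ 1 ℙ
    filter_upwards [h0, Lp.coeFn_smul (n : ℝ) one, hone] with x h1 h2 h3
    rw [h1, h2, Pi.smul_apply, h3, smul_eq_mul, mul_one]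
    exact_mod_cast n.cast_nonneg
  have hXncoe : ∀ (X : Lp ℝ 1 ℙ) (n : ℕ),
      ⇑(X ⊓ ((n : ℝ) • one)) =ᵐ[ℙ] fun x => min ((X : Ω → ℝ) x) n := by
    intro X n
    refine (Lp.coeFn_inf _ _).trans ?_
    filter_upwards [Lp.coeFn_smul (n : ℝ) one, hone] with x h1 h2
    show ((X : Ω → ℝ) ⊓ ((n : ℝ) • one : Lp ℝ 1 ℙ)) x = min ((X : Ω → ℝ) x) n
    rw [Pi.inf_apply, h1, Pi.smul_apply, h2, smul_eq_mul, mul_one]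
  have hXnmono : ∀ X : Lp ℝ 1 ℙ, Monotone (fun n : ℕ => X ⊓ ((n : ℝ) • one)) := by
    intro X a b hab
    refine inf_le_inf_left X ?_
    rw [← Lp.coeFn_le]
    filter_upwards [Lp.coeFn_smul (a : ℝ) one, Lp.coeFn_smul (b : ℝ) one, hone]
      with x h1 h2 h3
    rw [h1, h2, Pi.smul_apply, Pi.smul_apply, h3, smul_eq_mul, smul_eq_mul, mul_one, mul_one]
    exact_mod_cast hab
  have hXnbd : ∀ X : Lp ℝ 1 ℙ, 0 ≤ X → ∀ n : ℕ, |X ⊓ ((n : ℝ) • one)| ≤ X := by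
    intro X hX0 n
    rw [← Lp.coeFn_le]
    filter_upwards [Lp.coeFn_abs (X ⊓ ((n : ℝ) • one)), hXncoe X n, hnn X hX0]
      with x h1 h2 h3
    rw [h1, h2]
    rw [abs_of_nonneg (le_min h3 n.cast_nonneg)]
    exact min_le_left _ _
  have hXnlub : ∀ X : Lp ℝ 1 ℙ, IsLUB (Set.range fun n : ℕ => X ⊓ ((n : ℝ) • one)) X := by
    intro X
    constructor
    · rintro _ ⟨n, rfl⟩
      exact inf_le_left
    · intro W hW
      have hWall : ∀ᵐ x ∂ℙ, ∀ n : ℕ, min ((X : Ω → ℝ) x) n ≤ W x := by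
        rw [ae_all_iff]
        intro n
        have h1 := hle_ae _ _ (hW ⟨n, rfl⟩)
        filter_upwards [h1, hXncoe X n] with x hx h2
        rw [← h2]; exact hx
      rw [← Lp.coeFn_le]
      filter_upwards [hWall] with x hx
      have := hx (Nat.ceil ((X : Ω → ℝ) x))
      rwa [min_eq_left (Nat.le_ceil _)] at this
  -- nonneg integral identity & integrability
  have hnonneg : ∀ X : Lp ℝ 1 ℙ, 0 ≤ X →
      Integrable (X : Ω → ℝ) Q ∧ ∫ x, (X : Ω → ℝ) x ∂Q = ∫ x, (ℓ X : Ω → ℝ) x ∂ℙ := by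
    intro X hX0
    set Xn : ℕ → Lp ℝ 1 ℙ := fun n => X ⊓ ((n : ℝ) • one) with hXn_def
    have htendInt := lub_integral_tendsto (fun n => ℓ (Xn n)) (ℓ X)
      (fun a b hab => hℓmono _ _ (hXnmono X hab))
      (hℓcb Xn X X (hXnmono X) (hXnbd X hX0) (hXnlub X))
    have hXn0 : ∀ n : ℕ, 0 ≤ Xn n := fun n => le_inf hX0 (hzero_le_smul_one n)
    have hIQn : ∀ n : ℕ, ∫ x, (Xn n : Ω → ℝ) x ∂Q = ∫ x, (ℓ (Xn n) : Ω → ℝ) x ∂ℙ := by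
      intro n
      refine hbdd (Xn n) n (hXn0 n) ?_
      filter_upwards [hXncoe X n] with x hx
      rw [hx]; exact min_le_right _ _
    set r : ℝ := ∫ x, (ℓ X : Ω → ℝ) x ∂ℙ with hr_def
    have hrn_mono : Monotone fun n : ℕ => ∫ x, (ℓ (Xn n) : Ω → ℝ) x ∂ℙ := fun a b hab =>
      integral_mono_ae (hint _) (hint _) (hle_ae _ _ (hℓmono _ _ (hXnmono X hab)))
    have hrn_le : ∀ n, ∫ x, (ℓ (Xn n) : Ω → ℝ) x ∂ℙ ≤ r := fun n =>
      hrn_mono.ge_of_tendsto htendInt n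
    have hminQint : ∀ n : ℕ, Integrable (fun x => min ((X : Ω → ℝ) x) n) Q := by
      intro n
      refine Integrable.mono' (integrable_const (n : ℝ))
        (((Lp.stronglyMeasurable X).measurable.min measurable_const).aestronglyMeasurable) ?_
      refine haeQ' ?_
      filter_upwards [hnn X hX0] with x hx
      rw [Real.norm_eq_abs, abs_of_nonneg (le_min hx n.cast_nonneg)]
      exact min_le_right _ _
    have hlint : ∫⁻ x, ENNReal.ofReal ((X : Ω → ℝ) x) ∂Q = ENNReal.ofReal r := by
      have heq : ∀ᵐ x ∂Q, ENNReal.ofReal ((X : Ω → ℝ) x)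
          = ⨆ n : ℕ, ENNReal.ofReal (min ((X : Ω → ℝ) x) n) := by
        refine haeQ' ?_
        filter_upwards [hnn X hX0] with x hx
        refine le_antisymm ?_ (iSup_le fun n => ENNReal.ofReal_le_ofReal (min_le_left _ _))
        refine le_iSup_of_le (Nat.ceil ((X : Ω → ℝ) x)) ?_
        rw [min_eq_left (Nat.le_ceil _)]
      rw [lintegral_congr_ae heq,
        lintegral_iSup' (fun n => (((Lp.stronglyMeasurable X).measurable.min
          measurable_const).ennreal_ofReal).aemeasurable)
          (Filter.Eventually.of_forall fun x a b hab =>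
            ENNReal.ofReal_le_ofReal (min_le_min le_rfl (Nat.cast_le.2 hab)))]
      have hb : ∀ n : ℕ, ∫⁻ x, ENNReal.ofReal (min ((X : Ω → ℝ) x) n) ∂Q
          = ENNReal.ofReal (∫ x, (ℓ (Xn n) : Ω → ℝ) x ∂ℙ) := by
        intro n
        rw [← hIQn n, integral_congr_ae (haeQ (hXncoe X n)),
          ofReal_integral_eq_lintegral_ofReal (hminQint n)]
        refine haeQ' ?_
        filter_upwards [hnn X hX0] with x hx
        exact le_min hx n.cast_nonneg
      rw [iSup_congr hb]
      refine le_antisymm (iSup_le fun n => ENNReal.ofReal_le_ofReal (hrn_le n)) ?_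
      have htends : Filter.Tendsto (fun n : ℕ => ENNReal.ofReal (∫ x, (ℓ (Xn n) : Ω → ℝ) x ∂ℙ))
          Filter.atTop (nhds (ENNReal.ofReal r)) :=
        (ENNReal.continuous_ofReal.continuousAt).tendsto.comp htendInt
      exact le_of_tendsto' htends fun n => le_iSup
        (fun n : ℕ => ENNReal.ofReal (∫ x, (ℓ (Xn n) : Ω → ℝ) x ∂ℙ)) n
    have hr0 : 0 ≤ r := integral_nonneg_of_ae (hnn _ (hlpos X hX0))
    have hX0Q : ∀ᵐ x ∂Q, 0 ≤ (X : Ω → ℝ) x := haeQ' (hnn X hX0)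
    have hXint : Integrable (X : Ω → ℝ) Q := by
      refine ⟨(Lp.stronglyMeasurable X).aestronglyMeasurable, ?_⟩
      rw [hasFiniteIntegral_iff_ofReal hX0Q, hlint]
      exact ENNReal.ofReal_lt_top
    refine ⟨hXint, ?_⟩
    rw [integral_eq_lintegral_of_nonneg_ae hX0Q hXint.1, hlint, ENNReal.toReal_ofReal hr0]
  -- general integral identity & integrability
  have hall : ∀ X : Lp ℝ 1 ℙ,
      Integrable (X : Ω → ℝ) Q ∧ ∫ x, (X : Ω → ℝ) x ∂Q = ∫ x, (ℓ X : Ω → ℝ) x ∂ℙ := by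
    intro X
    set P : Lp ℝ 1 ℙ := X ⊔ 0 with hP_def
    set N : Lp ℝ 1 ℙ := (-X) ⊔ 0 with hN_def
    have hP0 : 0 ≤ P := le_sup_right
    have hN0 : 0 ≤ N := le_sup_right
    have hPNcoe : ∀ᵐ x ∂ℙ, (X : Ω → ℝ) x = (P : Ω → ℝ) x - (N : Ω → ℝ) x := by
      have h0 := Lp.coeFn_zero ℝ 1 ℙ
      filter_upwards [Lp.coeFn_sup X 0, Lp.coeFn_sup (-X) 0, Lp.coeFn_neg X, h0]
        with x h1 h2 h3 h4
      rw [hP_def, hN_def, h1, h2, Pi.sup_apply, Pi.sup_apply, h3, Pi.neg_apply, h4,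
        Pi.zero_apply]
      rw [max_zero_sub_max_neg_zero_eq_self]
    have hPN : X = P - N := by
      apply Lp.ext
      filter_upwards [hPNcoe, Lp.coeFn_sub P N] with x h1 h2
      rw [h1, h2, Pi.sub_apply]
    obtain ⟨hPint, hPeq⟩ := hnonneg P hP0
    obtain ⟨hNint, hNeq⟩ := hnonneg N hN0
    have hXQint : Integrable (X : Ω → ℝ) Q := by
      refine (hPint.sub hNint).congr (haeQ ?_)
      filter_upwards [hPNcoe] with x hx
      rw [Pi.sub_apply, ← hx]
    refine ⟨hXQint, ?_⟩
    have hlXPN : ℓ X = ℓ P - ℓ N := by rw [hPN, map_sub]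
    calc ∫ x, (X : Ω → ℝ) x ∂Q
        = ∫ x, ((P : Ω → ℝ) x - (N : Ω → ℝ) x) ∂Q :=
          integral_congr_ae (haeQ hPNcoe)
      _ = ∫ x, (P : Ω → ℝ) x ∂Q - ∫ x, (N : Ω → ℝ) x ∂Q := integral_sub hPint hNint
      _ = ∫ x, (ℓ P : Ω → ℝ) x ∂ℙ - ∫ x, (ℓ N : Ω → ℝ) x ∂ℙ := by rw [hPeq, hNeq]
      _ = ∫ x, ((ℓ P : Ω → ℝ) x - (ℓ N : Ω → ℝ) x) ∂ℙ := (integral_sub (hint _) (hint _)).symm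
      _ = ∫ x, (ℓ X : Ω → ℝ) x ∂ℙ := by
          refine integral_congr_ae ?_
          rw [hlXPN]
          filter_upwards [Lp.coeFn_sub (ℓ P) (ℓ N)] with x hx
          rw [hx, Pi.sub_apply]
  
  -- multiplication by indicator
  set iA : ∀ (A : Set Ω), MeasurableSet[F] A → Lp ℝ 1 ℙ → Lp ℝ 1 ℙ := fun A hA X =>
    MemLp.toLp (A.indicator (X : Ω → ℝ)) ((Lp.memLp X).indicator hA) with hiA_def
  have hiAcoe : ∀ (A : Set Ω) (hA : MeasurableSet[F] A) (X : Lp ℝ 1 ℙ),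
      ⇑(iA A hA X) =ᵐ[ℙ] A.indicator (X : Ω → ℝ) := fun A hA X => MemLp.coeFn_toLp _
  -- support lemma: if Z is supported in A ∈ G and bounded there, ℓ Z vanishes off A
  have hsupp : ∀ (A : Set Ω) (hA : MeasurableSet[G] A) (Z : Lp ℝ 1 ℙ) (c : ℝ), 0 ≤ c →
      (∀ᵐ x ∂ℙ, |(Z : Ω → ℝ) x| ≤ c * A.indicator (fun _ => (1:ℝ)) x) →
      (∀ᵐ x ∂ℙ, x ∉ A → (ℓ Z : Ω → ℝ) x = 0) := by
    intro A hA Z c hc hZ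
    set M : Lp ℝ 1 ℙ := c • e A (hG A hA) with hM_def
    have hMcoe : ⇑M =ᵐ[ℙ] fun x => c * A.indicator (fun _ => (1:ℝ)) x := by
      filter_upwards [Lp.coeFn_smul c (e A (hG A hA)), he A (hG A hA)] with x h1 h2
      rw [hM_def, h1, Pi.smul_apply, h2, smul_eq_mul]
    have hMnormed : h M = M := by
      refine hnorm M ⟨A.indicator (fun _ => c), (@measurable_const ℝ Ω _ G c).indicator hA, ?_⟩
      refine hMcoe.trans (Filter.Eventually.of_forall fun x => ?_)
      by_cases hx : x ∈ A <;> simp [hx]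
    have hb : ∀ W : Lp ℝ 1 ℙ, W ≤ M → ℓ W ≤ M := fun W hW =>
      le_trans (hdom W) (le_trans (hmono hW) (le_of_eq hMnormed))
    have h1 : ℓ Z ≤ M := by
      refine hb Z ((Lp.coeFn_le _ _).1 ?_)
      filter_upwards [hZ, hMcoe] with x hx hM
      rw [hM]
      exact le_trans (le_abs_self _) hx
    have h2 : ℓ (-Z) ≤ M := by
      refine hb (-Z) ((Lp.coeFn_le _ _).1 ?_)
      filter_upwards [hZ, hMcoe, Lp.coeFn_neg Z] with x hx hM hneg
      rw [hM, hneg, Pi.neg_apply]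
      exact le_trans (neg_le_abs _) hx
    have h2' : (-(ℓ Z) : Lp ℝ 1 ℙ) ≤ M := by rwa [map_neg] at h2
    have p1 := hle_ae _ _ h1
    have p2 := hle_ae _ _ h2'
    filter_upwards [p1, p2, hMcoe, Lp.coeFn_neg (ℓ Z)] with x a1 a2 a3 a4 hxA
    rw [a3, Set.indicator_of_notMem hxA, mul_zero] at a1 a2
    rw [a4, Pi.neg_apply] at a2
    linarith
  -- bounded pull-out
  have hpull_bdd : ∀ (A : Set Ω) (hA : MeasurableSet[G] A) (X : Lp ℝ 1 ℙ) (c : ℝ), 0 ≤ c →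
      (∀ᵐ x ∂ℙ, |(X : Ω → ℝ) x| ≤ c) →
      ⇑(ℓ (iA A (hG A hA) X)) =ᵐ[ℙ] A.indicator (ℓ X : Ω → ℝ) := by
    intro A hA X c hc hXc
    have hAc : MeasurableSet[G] Aᶜ := hA.compl
    have hsplit : iA A (hG A hA) X + iA Aᶜ (hG Aᶜ hAc) X = X := by
      apply Lp.ext
      filter_upwards [Lp.coeFn_add (iA A (hG A hA) X) (iA Aᶜ (hG Aᶜ hAc) X),
        hiAcoe A (hG A hA) X, hiAcoe Aᶜ (hG Aᶜ hAc) X] with x h1 h2 h3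
      rw [h1, Pi.add_apply, h2, h3]
      by_cases hx : x ∈ A
      · rw [Set.indicator_of_mem hx, Set.indicator_of_notMem (by simpa using hx), add_zero]
      · rw [Set.indicator_of_notMem hx, Set.indicator_of_mem (by simpa using hx), zero_add]
    have z1 : ∀ᵐ x ∂ℙ, x ∉ A → (ℓ (iA A (hG A hA) X) : Ω → ℝ) x = 0 := by
      refine hsupp A hA _ c hc ?_
      filter_upwards [hiAcoe A (hG A hA) X, hXc] with x h1 h2
      rw [h1]
      by_cases hx : x ∈ A
      · rw [Set.indicator_of_mem hx, Set.indicator_of_mem hx, mul_one]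
        exact h2
      · rw [Set.indicator_of_notMem hx, Set.indicator_of_notMem hx, mul_zero, abs_zero]
    have z2 : ∀ᵐ x ∂ℙ, x ∉ Aᶜ → (ℓ (iA Aᶜ (hG Aᶜ hAc) X) : Ω → ℝ) x = 0 := by
      refine hsupp Aᶜ hAc _ c hc ?_
      filter_upwards [hiAcoe Aᶜ (hG Aᶜ hAc) X, hXc] with x h1 h2
      rw [h1]
      by_cases hx : x ∈ Aᶜ
      · rw [Set.indicator_of_mem hx, Set.indicator_of_mem hx, mul_one]
        exact h2
      · rw [Set.indicator_of_notMem hx, Set.indicator_of_notMem hx, mul_zero, abs_zero]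
    have hsum : ∀ᵐ x ∂ℙ, (ℓ (iA A (hG A hA) X) : Ω → ℝ) x
        + (ℓ (iA Aᶜ (hG Aᶜ hAc) X) : Ω → ℝ) x = (ℓ X : Ω → ℝ) x := by
      have hmapeq : ℓ (iA A (hG A hA) X) + ℓ (iA Aᶜ (hG Aᶜ hAc) X) = ℓ X := by
        rw [← map_add, hsplit]
      have hcadd := Lp.coeFn_add (ℓ (iA A (hG A hA) X)) (ℓ (iA Aᶜ (hG Aᶜ hAc) X))
      filter_upwards [hcadd] with x h1
      have h2 : ((ℓ (iA A (hG A hA) X) + ℓ (iA Aᶜ (hG Aᶜ hAc) X) : Lp ℝ 1 ℙ) : Ω → ℝ) x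
          = (ℓ X : Ω → ℝ) x := congrArg (fun u : Lp ℝ 1 ℙ => (u : Ω → ℝ) x) hmapeq
      rw [← h2, h1, Pi.add_apply]
    filter_upwards [hsum, z1, z2] with x h1 h2 h3
    by_cases hx : x ∈ A
    · rw [Set.indicator_of_mem hx, ← h1, h3 (by simpa using hx), add_zero]
    · rw [Set.indicator_of_notMem hx, h2 hx]
  -- integrated pull-out for nonneg X
  have hpull_nn : ∀ (A : Set Ω) (hA : MeasurableSet[G] A) (X : Lp ℝ 1 ℙ), 0 ≤ X →
      ∫ x, (ℓ (iA A (hG A hA) X) : Ω → ℝ) x ∂ℙ = ∫ x in A, (ℓ X : Ω → ℝ) x ∂ℙ := by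
    intro A hA X hX0
    set Xn : ℕ → Lp ℝ 1 ℙ := fun n => X ⊓ ((n : ℝ) • one) with hXn_def
    set Zn : ℕ → Lp ℝ 1 ℙ := fun n => iA A (hG A hA) (Xn n) with hZn_def
    have hZncoe : ∀ n, ⇑(Zn n) =ᵐ[ℙ] fun x => A.indicator (fun y => min ((X : Ω → ℝ) y) n) x := by
      intro n
      refine (hiAcoe A (hG A hA) (Xn n)).trans ?_
      filter_upwards [hXncoe X n] with x hx
      by_cases hmem : x ∈ A
      · rw [Set.indicator_of_mem hmem, Set.indicator_of_mem hmem, hx]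
      · rw [Set.indicator_of_notMem hmem, Set.indicator_of_notMem hmem]
    have hZmono : Monotone Zn := by
      intro a b hab
      rw [← Lp.coeFn_le]
      filter_upwards [hZncoe a, hZncoe b] with x h1 h2
      rw [h1, h2]
      by_cases hmem : x ∈ A
      · rw [Set.indicator_of_mem hmem, Set.indicator_of_mem hmem]
        exact min_le_min le_rfl (Nat.cast_le.2 hab)
      · rw [Set.indicator_of_notMem hmem, Set.indicator_of_notMem hmem]
    have hZbd : ∀ n, |Zn n| ≤ X := by
      intro n
      rw [← Lp.coeFn_le]
      filter_upwards [Lp.coeFn_abs (Zn n), hZncoe n, hnn X hX0] with x h1 h2 h3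
      rw [h1, h2]
      by_cases hmem : x ∈ A
      · rw [Set.indicator_of_mem hmem, abs_of_nonneg (le_min h3 n.cast_nonneg)]
        exact min_le_left _ _
      · rw [Set.indicator_of_notMem hmem, abs_zero]
        exact h3
    have hZlub : IsLUB (Set.range Zn) (iA A (hG A hA) X) := by
      constructor
      · rintro _ ⟨n, rfl⟩
        rw [← Lp.coeFn_le]
        filter_upwards [hZncoe n, hiAcoe A (hG A hA) X] with x h1 h2
        rw [h1, h2]
        by_cases hmem : x ∈ A
        · rw [Set.indicator_of_mem hmem, Set.indicator_of_mem hmem]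
          exact min_le_left _ _
        · rw [Set.indicator_of_notMem hmem, Set.indicator_of_notMem hmem]
      · intro W hW
        have hWall : ∀ᵐ x ∂ℙ, ∀ n : ℕ,
            A.indicator (fun y => min ((X : Ω → ℝ) y) n) x ≤ W x := by
          rw [ae_all_iff]
          intro n
          have h1 := hle_ae _ _ (hW ⟨n, rfl⟩)
          filter_upwards [h1, hZncoe n] with x hx h2
          rw [← h2]; exact hx
        rw [← Lp.coeFn_le]
        filter_upwards [hWall, hiAcoe A (hG A hA) X] with x h1 h2
        rw [h2]
        by_cases hmem : x ∈ A
        · rw [Set.indicator_of_mem hmem]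
          have := h1 (Nat.ceil ((X : Ω → ℝ) x))
          rwa [Set.indicator_of_mem hmem, min_eq_left (Nat.le_ceil _)] at this
        · rw [Set.indicator_of_notMem hmem]
          have := h1 0
          rwa [Set.indicator_of_notMem hmem] at this
    have htendL := lub_integral_tendsto (fun n => ℓ (Zn n)) (ℓ (iA A (hG A hA) X))
      (fun a b hab => hℓmono _ _ (hZmono hab))
      (hℓcb Zn (iA A (hG A hA) X) X hZmono hZbd hZlub)
    -- each term equals a set integral
    have hXnabs : ∀ n : ℕ, ∀ᵐ x ∂ℙ, |(Xn n : Ω → ℝ) x| ≤ (n : ℝ) := by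
      intro n
      filter_upwards [hXncoe X n, hnn X hX0] with x h1 h2
      rw [h1, abs_of_nonneg (le_min h2 n.cast_nonneg)]
      exact min_le_right _ _
    have hterm : ∀ n, ∫ x, (ℓ (Zn n) : Ω → ℝ) x ∂ℙ = ∫ x in A, (ℓ (Xn n) : Ω → ℝ) x ∂ℙ := by
      intro n
      rw [integral_congr_ae (hpull_bdd A hA (Xn n) n n.cast_nonneg (hXnabs n)),
        integral_indicator (hG A hA)]
    -- set integrals converge
    have haet := lub_ae_tendsto (fun n => ℓ (Xn n)) (ℓ X)
      (fun a b hab => hℓmono _ _ (hXnmono X hab))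
      (hℓcb Xn X X (hXnmono X) (hXnbd X hX0) (hXnlub X))
    have hmonoae : ∀ᵐ x ∂ℙ, Monotone fun n : ℕ => (ℓ (Xn n) : Ω → ℝ) x := by
      have hmx : ∀ᵐ x ∂ℙ, ∀ n : ℕ, (ℓ (Xn n) : Ω → ℝ) x ≤ (ℓ (Xn (n+1)) : Ω → ℝ) x :=
        ae_all_iff.2 fun n => hle_ae _ _ (hℓmono _ _ (hXnmono X (Nat.le_succ n)))
      filter_upwards [hmx] with x hx
      exact monotone_nat_of_le_succ hx
    have htendR : Filter.Tendsto (fun n => ∫ x in A, (ℓ (Xn n) : Ω → ℝ) x ∂ℙ)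
        Filter.atTop (nhds (∫ x in A, (ℓ X : Ω → ℝ) x ∂ℙ)) := by
      refine integral_tendsto_of_tendsto_of_monotone
        (fun n => (hint (ℓ (Xn n))).integrableOn) ((hint (ℓ X)).integrableOn)
        (ae_restrict_of_ae hmonoae) (ae_restrict_of_ae haet)
    refine tendsto_nhds_unique ?_ htendR
    exact htendL.congr fun n => hterm n
  -- integrated pull-out, general
  have hpull : ∀ (A : Set Ω) (hA : MeasurableSet[G] A) (X : Lp ℝ 1 ℙ),
      ∫ x, (ℓ (iA A (hG A hA) X) : Ω → ℝ) x ∂ℙ = ∫ x in A, (ℓ X : Ω → ℝ) x ∂ℙ := by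
    intro A hA X
    set P : Lp ℝ 1 ℙ := X ⊔ 0 with hP_def
    set N : Lp ℝ 1 ℙ := (-X) ⊔ 0 with hN_def
    have hP0 : 0 ≤ P := le_sup_right
    have hN0 : 0 ≤ N := le_sup_right
    have hPNcoe : ∀ᵐ x ∂ℙ, (X : Ω → ℝ) x = (P : Ω → ℝ) x - (N : Ω → ℝ) x := by
      have h0 := Lp.coeFn_zero ℝ 1 ℙ
      filter_upwards [Lp.coeFn_sup X 0, Lp.coeFn_sup (-X) 0, Lp.coeFn_neg X, h0]
        with x h1 h2 h3 h4
      rw [hP_def, hN_def, h1, h2, Pi.sup_apply, Pi.sup_apply, h3, Pi.neg_apply, h4,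
        Pi.zero_apply]
      rw [max_zero_sub_max_neg_zero_eq_self]
    have hiAPN : iA A (hG A hA) X = iA A (hG A hA) P - iA A (hG A hA) N := by
      apply Lp.ext
      filter_upwards [hiAcoe A (hG A hA) X, hiAcoe A (hG A hA) P, hiAcoe A (hG A hA) N,
        Lp.coeFn_sub (iA A (hG A hA) P) (iA A (hG A hA) N), hPNcoe] with x h1 h2 h3 h4 h5
      rw [h1, h4, Pi.sub_apply, h2, h3]
      by_cases hmem : x ∈ A
      · rw [Set.indicator_of_mem hmem, Set.indicator_of_mem hmem,
          Set.indicator_of_mem hmem, h5]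
      · rw [Set.indicator_of_notMem hmem, Set.indicator_of_notMem hmem,
          Set.indicator_of_notMem hmem, sub_zero]
    have hlsub : ℓ (iA A (hG A hA) X) = ℓ (iA A (hG A hA) P) - ℓ (iA A (hG A hA) N) := by
      rw [hiAPN, map_sub]
    calc ∫ x, (ℓ (iA A (hG A hA) X) : Ω → ℝ) x ∂ℙ
        = ∫ x, ((ℓ (iA A (hG A hA) P) : Ω → ℝ) x - (ℓ (iA A (hG A hA) N) : Ω → ℝ) x) ∂ℙ := by
          rw [hlsub]
          refine integral_congr_ae ?_
          filter_upwards [Lp.coeFn_sub (ℓ (iA A (hG A hA) P)) (ℓ (iA A (hG A hA) N))]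
            with x hx
          rw [hx, Pi.sub_apply]
      _ = ∫ x, (ℓ (iA A (hG A hA) P) : Ω → ℝ) x ∂ℙ
            - ∫ x, (ℓ (iA A (hG A hA) N) : Ω → ℝ) x ∂ℙ := integral_sub (hint _) (hint _)
      _ = ∫ x in A, (ℓ P : Ω → ℝ) x ∂ℙ - ∫ x in A, (ℓ N : Ω → ℝ) x ∂ℙ := by
          rw [hpull_nn A hA P hP0, hpull_nn A hA N hN0]
      _ = ∫ x in A, ((ℓ P : Ω → ℝ) x - (ℓ N : Ω → ℝ) x) ∂ℙ :=
          (integral_sub ((hint _).integrableOn) ((hint _).integrableOn)).symm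
      _ = ∫ x in A, (ℓ X : Ω → ℝ) x ∂ℙ := by
          refine integral_congr_ae (ae_restrict_of_ae ?_)
          have hlXPN : ℓ X = ℓ P - ℓ N := by
            rw [hP_def, hN_def]
            have : X = P - N := by
              apply Lp.ext
              filter_upwards [hPNcoe, Lp.coeFn_sub P N] with x h1 h2
              rw [h1, h2, Pi.sub_apply]
            rw [← hP_def, ← hN_def, this, map_sub]
          rw [hlXPN]
          filter_upwards [Lp.coeFn_sub (ℓ P) (ℓ N)] with x hx
          rw [hx, Pi.sub_apply]
  
  -- integrals of G-measurable functions agree under Q and ℙ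
  have htrim : ∀ (g : Ω → ℝ), StronglyMeasurable[G] g → ∀ s : Set Ω, MeasurableSet[G] s →
      ∫ x in s, g x ∂Q = ∫ x in s, g x ∂ℙ := by
    intro g hg s hs
    have hmeq : (Q.restrict s).trim hG = (ℙ.restrict s).trim hG := by
      refine @Measure.ext Ω G _ _ fun t ht => ?_
      rw [trim_measurableSet_eq hG ht, trim_measurableSet_eq hG ht,
        Measure.restrict_apply (hG t ht), Measure.restrict_apply (hG t ht),
        hQG _ (MeasurableSet.inter ht hs)]
    calc ∫ x in s, g x ∂Q = ∫ x, g x ∂((Q.restrict s).trim hG) := integral_trim hG hg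
      _ = ∫ x, g x ∂((ℙ.restrict s).trim hG) := by rw [hmeq]
      _ = ∫ x in s, g x ∂ℙ := (integral_trim hG hg).symm
  -- conclusion
  haveI hfinQtrim : IsFiniteMeasure (Q.trim hG) :=
    ⟨by rw [trim_measurableSet_eq hG MeasurableSet.univ]; exact measure_lt_top Q _⟩
  refine ⟨Q, hQprob, hac, hQG, ?_⟩
  intro X
  obtain ⟨g', hg'm, hg'ae⟩ := hℓmeas X
  have hg'aeQ : (ℓ X : Ω → ℝ) =ᵐ[Q] g' := haeQ hg'ae
  have hXiQ : Integrable (X : Ω → ℝ) Q := (hall X).1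
  have hliQ : Integrable (ℓ X : Ω → ℝ) Q := (hall (ℓ X)).1
  have hseteq : ∀ s : Set Ω, MeasurableSet[G] s → Q s < ⊤ →
      ∫ x in s, (ℓ X : Ω → ℝ) x ∂Q = ∫ x in s, (X : Ω → ℝ) x ∂Q := by
    intro s hs _
    have h1 : ∫ x in s, (X : Ω → ℝ) x ∂Q = ∫ x, (iA s (hG s hs) X : Ω → ℝ) x ∂Q := by
      rw [← integral_indicator (hG s hs)]
      exact (integral_congr_ae (haeQ (hiAcoe s (hG s hs) X))).symm
    rw [h1, (hall (iA s (hG s hs) X)).2, hpull s hs X]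
    calc ∫ x in s, (ℓ X : Ω → ℝ) x ∂Q
        = ∫ x in s, g' x ∂Q := integral_congr_ae (ae_restrict_of_ae hg'aeQ)
      _ = ∫ x in s, g' x ∂ℙ := htrim g' hg'm.stronglyMeasurable s hs
      _ = ∫ x in s, (ℓ X : Ω → ℝ) x ∂ℙ :=
          (integral_congr_ae (ae_restrict_of_ae hg'ae)).symm
  have hcond : (ℓ X : Ω → ℝ) =ᵐ[Q] Q[(X : Ω → ℝ) | G] :=
    ae_eq_condExp_of_forall_setIntegral_eq hG hXiQ
      (fun s _ _ => hliQ.integrableOn) hseteq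
      ⟨g', hg'm.stronglyMeasurable, hg'aeQ⟩
  have hgc : g' =ᵐ[Q] Q[(X : Ω → ℝ) | G] := hg'aeQ.symm.trans hcond
  have hD : MeasurableSet[G] {x | g' x ≠ (Q[(X : Ω → ℝ) | G]) x} := by
    have h2 : Measurable[G] (Q[(X : Ω → ℝ) | G]) :=
      (stronglyMeasurable_condExp (m := G)).measurable
    exact (measurableSet_eq_fun hg'm h2).compl
  have hQD : Q {x | g' x ≠ (Q[(X : Ω → ℝ) | G]) x} = 0 := ae_iff.1 hgc
  have hPD : ℙ {x | g' x ≠ (Q[(X : Ω → ℝ) | G]) x} = 0 := by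
    rw [← hQG _ hD]; exact hQD
  exact hg'ae.trans (ae_iff.2 hPD)
end

section
/- Let u : (0,∞) → ℝ be strictly concave and continuous, and let X₁,…,Xₙ (n ≥ 3) be i.i.d. positive nonconstant random variables with S = Σ X_i and E[|u(S)|] < ∞. Then E[u(S/n)] > E[u(X₁)], and E[u((1−ε)S/n)] → E[u(S/n)] as ε ↓ 0; hence for all sufficiently small ε > 0, E[u((1−ε)S/n)] > E[u(X₁)]. -/
open MeasureTheory Filter

/-- Bound for a concave function on `[c/2, c]`. -/
lemma stmt13_concave_bound {u : ℝ → ℝ} (hu : ConcaveOn ℝ (Set.Ioi 0) u) {c t : ℝ} (hc : 0 < c)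
    (ht1 : c/2 ≤ t) (ht2 : t ≤ c) :
    |u t| ≤ |u c| + 4*|u (c/2)| + 3*|u (c/4)| := by
  have hm : (0:ℝ) < c/2 := by linarith
  have hq : (0:ℝ) < c/4 := by linarith
  have habs1 : 0 ≤ |u c| := abs_nonneg _
  have habs2 : 0 ≤ |u (c/2)| := abs_nonneg _
  have habs3 : 0 ≤ |u (c/4)| := abs_nonneg _
  have hlow : -(|u (c/2)| + |u c|) ≤ u t := by
    set lam : ℝ := (c - t)/(c/2) with hlam
    have ha0 : 0 ≤ lam := by apply div_nonneg <;> linarith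
    have ha1 : lam ≤ 1 := by rw [div_le_one (by linarith)]; linarith
    have hab : lam + (1 - lam) = 1 := by ring
    have key := hu.2 (Set.mem_Ioi.2 hm) (Set.mem_Ioi.2 hc) ha0 (by linarith) hab
    have hcomb : lam • (c/2) + (1-lam) • c = t := by
      have e : lam * (c/2) = c - t := by
        rw [hlam, div_mul_cancel₀ _ hm.ne']
      simp only [smul_eq_mul]
      linear_combination -e
    rw [hcomb] at key
    simp only [smul_eq_mul] at key
    nlinarith [neg_abs_le (u (c/2)), neg_abs_le (u c),
      mul_le_mul_of_nonneg_left (neg_abs_le (u (c/2))) ha0,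
      mul_le_of_le_one_left habs2 ha1,
      mul_le_mul_of_nonneg_left (neg_abs_le (u c)) (by linarith : (0:ℝ) ≤ 1 - lam),
      mul_le_of_le_one_left habs1 (by linarith : 1 - lam ≤ 1)]
  have hup : u t ≤ 3*(|u (c/2)| + |u (c/4)|) := by
    rcases eq_or_lt_of_le ht1 with h|h
    · rw [← h]
      nlinarith [le_abs_self (u (c/2))]
    · set b : ℝ := (t - c/2)/(t - c/4) with hb
      have hd : 0 < t - c/4 := by linarith
      have hb0 : 0 ≤ b := div_nonneg (by linarith) hd.le
      have hb1 : b < 1 := by rw [div_lt_one hd]; linarith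
      have h13 : 1/3 ≤ 1 - b := by
        have : b ≤ 2/3 := by rw [hb, div_le_iff₀ hd]; linarith
        linarith
      have hab : b + (1 - b) = 1 := by ring
      have key := hu.2 (Set.mem_Ioi.2 hq) (Set.mem_Ioi.2 (show (0:ℝ) < t by linarith))
        hb0 (by linarith) hab
      have hcomb : b • (c/4) + (1-b) • t = c/2 := by
        have e : b * (t - c/4) = t - c/2 := by
          rw [hb, div_mul_cancel₀ _ hd.ne']
        simp only [smul_eq_mul]
        linear_combination -e
      rw [hcomb] at key
      simp only [smul_eq_mul] at key
      rcases le_or_gt (u t) 0 with h'|h'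
      · nlinarith
      · have hstep : (1-b) * u t ≤ |u (c/2)| + |u (c/4)| := by
          nlinarith [le_abs_self (u (c/2)), neg_abs_le (u (c/4)),
            mul_le_mul_of_nonneg_left (neg_abs_le (u (c/4))) hb0,
            mul_le_of_le_one_left habs3 hb1.le]
        nlinarith
  rw [abs_le]
  constructor <;> linarith

/-- A random variable independent of an a.e.-equal copy of itself is a.e. constant. -/
lemma stmt13_ae_const {Ω : Type*} [MeasurableSpace Ω] (P : Measure Ω) [IsProbabilityMeasure P]
    {f g : Ω → ℝ} (hf : Measurable f)
    (hfg : ProbabilityTheory.IndepFun f g P) (heq : f =ᵐ[P] g) :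
    ∃ c : ℝ, f =ᵐ[P] fun _ => c := by
  classical
  have key : ∀ x : ℝ, P {ω | f ω ≤ x} = 0 ∨ P {ω | f ω ≤ x} = 1 := by
    intro x
    have h1 : P (f ⁻¹' Set.Iic x ∩ g ⁻¹' Set.Iic x)
        = P (f ⁻¹' Set.Iic x) * P (g ⁻¹' Set.Iic x) :=
      hfg.measure_inter_preimage_eq_mul _ _ measurableSet_Iic measurableSet_Iic
    have e1 : (g ⁻¹' Set.Iic x : Set Ω) =ᵐ[P] (f ⁻¹' Set.Iic x : Set Ω) :=
      heq.mono fun ω h => by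
        show (g ω ≤ x) = (f ω ≤ x)
        rw [h]
    have e2 : (f ⁻¹' Set.Iic x ∩ g ⁻¹' Set.Iic x : Set Ω) =ᵐ[P] (f ⁻¹' Set.Iic x : Set Ω) :=
      heq.mono fun ω h => by
        show (f ω ≤ x ∧ g ω ≤ x) = (f ω ≤ x)
        rw [h, and_self]
    rw [measure_congr e2, measure_congr e1] at h1
    set p := P (f ⁻¹' Set.Iic x) with hp
    have hpt : p ≠ ⊤ := (measure_lt_top P _).ne
    by_cases h0 : p = 0
    · exact Or.inl h0
    · right
      have h1' : p.toReal = p.toReal * p.toReal := by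
        rw [← ENNReal.toReal_mul, ← h1]
      have hne : p.toReal ≠ 0 := by
        simp [ENNReal.toReal_eq_zero_iff, h0, hpt]
      have h2 : p.toReal * (p.toReal - 1) = 0 := by nlinarith [h1']
      rcases mul_eq_zero.mp h2 with h|h
      · exact absurd h hne
      · show p = 1
        rw [← ENNReal.toReal_eq_one_iff]; linarith
  have hne : {x : ℝ | P {ω | f ω ≤ x} = 1}.Nonempty := by
    by_contra h
    push_neg at h
    rw [Set.eq_empty_iff_forall_notMem] at h
    have h0 : ∀ k : ℕ, P {ω | f ω ≤ (k:ℝ)} = 0 := fun k =>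
      (key k).resolve_right (h k)
    have hU : P (⋃ k : ℕ, {ω | f ω ≤ (k:ℝ)}) = 0 := measure_iUnion_null h0
    have huniv : (⋃ k : ℕ, {ω | f ω ≤ (k:ℝ)}) = Set.univ := by
      ext ω
      simp only [Set.mem_iUnion, Set.mem_setOf_eq, Set.mem_univ, iff_true]
      exact exists_nat_ge (f ω)
    rw [huniv, measure_univ] at hU
    exact one_ne_zero hU
  have hlb : ∃ x₀ : ℝ, P {ω | f ω ≤ x₀} = 0 := by
    by_contra h
    push_neg at h
    have h1 : ∀ k : ℕ, P {ω | f ω ≤ -(k:ℝ)} = 1 := fun k => (key _).resolve_left (h _)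
    have h2 : ∀ k : ℕ, P ({ω | f ω ≤ -(k:ℝ)}ᶜ) = 0 := fun k => by
      have hms : MeasurableSet {ω | f ω ≤ -(k:ℝ)} := hf measurableSet_Iic
      rw [prob_compl_eq_zero_iff hms]
      exact h1 k
    have h3 : P (⋃ k : ℕ, {ω | f ω ≤ -(k:ℝ)}ᶜ) = 0 := measure_iUnion_null h2
    have h4 : (⋃ k : ℕ, {ω | f ω ≤ -(k:ℝ)}ᶜ) = Set.univ := by
      ext ω
      simp only [Set.mem_iUnion, Set.mem_compl_iff, Set.mem_setOf_eq, Set.mem_univ, iff_true,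
        not_le]
      obtain ⟨k, hk⟩ := exists_nat_gt (-f ω)
      exact ⟨k, by linarith⟩
    rw [h4, measure_univ] at h3
    exact one_ne_zero h3
  obtain ⟨x₀, hx₀⟩ := hlb
  have hbdd : BddBelow {x : ℝ | P {ω | f ω ≤ x} = 1} := by
    refine ⟨x₀, fun x hx => ?_⟩
    by_contra hlt
    push_neg at hlt
    have hmono : P {ω | f ω ≤ x} ≤ P {ω | f ω ≤ x₀} :=
      measure_mono fun ω h => le_trans h hlt.le
    rw [hx₀, hx] at hmono
    simp at hmono
  set c := sInf {x : ℝ | P {ω | f ω ≤ x} = 1} with hcdef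
  have hFc : ∀ y, c < y → P {ω | f ω ≤ y} = 1 := by
    intro y hy
    obtain ⟨z, hzT, hzy⟩ := exists_lt_of_csInf_lt hne hy
    have h1 : P {ω | f ω ≤ z} ≤ P {ω | f ω ≤ y} :=
      measure_mono fun ω h => le_trans h hzy.le
    rw [hzT] at h1
    exact le_antisymm prob_le_one h1
  have hF0 : ∀ y, y < c → P {ω | f ω ≤ y} = 0 := by
    intro y hy
    rcases key y with h|h
    · exact h
    · exact absurd (csInf_le hbdd h) (not_le.2 hy)
  have hae1 : ∀ᵐ ω ∂P, f ω ≤ c := by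
    rw [ae_iff]
    have hsub : {ω | ¬ f ω ≤ c} ⊆ ⋃ k : ℕ, ({ω | f ω ≤ c + 1/(k+1)}ᶜ) := by
      intro ω hω
      simp only [Set.mem_setOf_eq, not_le] at hω
      obtain ⟨k, hk⟩ := exists_nat_one_div_lt (show (0:ℝ) < f ω - c by linarith)
      refine Set.mem_iUnion.2 ⟨k, ?_⟩
      simp only [Set.mem_compl_iff, Set.mem_setOf_eq, not_le]
      linarith
    refine measure_mono_null hsub (measure_iUnion_null fun k => ?_)
    have hms : MeasurableSet {ω | f ω ≤ c + 1/((k:ℝ)+1)} := hf measurableSet_Iic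
    rw [prob_compl_eq_zero_iff hms]
    refine hFc _ ?_
    have : (0:ℝ) < 1/((k:ℝ)+1) := by positivity
    linarith
  have hae2 : ∀ᵐ ω ∂P, c ≤ f ω := by
    rw [ae_iff]
    have hsub : {ω | ¬ c ≤ f ω} ⊆ ⋃ k : ℕ, {ω | f ω ≤ c - 1/(k+1)} := by
      intro ω hω
      simp only [Set.mem_setOf_eq, not_le] at hω
      obtain ⟨k, hk⟩ := exists_nat_one_div_lt (show (0:ℝ) < c - f ω by linarith)
      refine Set.mem_iUnion.2 ⟨k, ?_⟩
      simp only [Set.mem_setOf_eq]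
      linarith
    refine measure_mono_null hsub (measure_iUnion_null fun k => ?_)
    refine hF0 _ ?_
    have : (0:ℝ) < 1/((k:ℝ)+1) := by positivity
    linarith
  refine ⟨c, ?_⟩
  filter_upwards [hae1, hae2] with ω h1 h2
  exact le_antisymm h1 h2

/-- For a strictly concave continuous `u` on `(0,∞)` and i.i.d. positive
nonconstant integrable `X₁,…,Xₙ` (`n ≥ 3`) with `E[|u(S)|] < ∞`, one has
`E[u(S/n)] > E[u(X₁)]`, `E[u((1−ε)S/n)] → E[u(S/n)]` as `ε ↓ 0`, and hence
`E[u((1−ε)S/n)] > E[u(X₁)]` for all sufficiently small `ε > 0`. -/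
theorem stmt_13 {Ω : Type*} [MeasurableSpace Ω] (P : Measure Ω) [IsProbabilityMeasure P]
    (n : ℕ) (hn : 3 ≤ n) (X : Fin n → Ω → ℝ)
    (hmeas : ∀ i, Measurable (X i))
    (hint : Integrable (X ⟨0, by omega⟩) P)
    (hindep : ProbabilityTheory.iIndepFun X P)
    (hident : ∀ i : Fin n, ProbabilityTheory.IdentDistrib (X i) (X ⟨0, by omega⟩) P P)
    (hpos : ∀ i, ∀ᵐ ω ∂P, 0 < X i ω)
    (hnonconst : ¬ ∃ c : ℝ, X ⟨0, by omega⟩ =ᵐ[P] fun _ => c)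
    (u : ℝ → ℝ)
    (hconc : StrictConcaveOn ℝ (Set.Ioi (0 : ℝ)) u)
    (hcont : ContinuousOn u (Set.Ioi (0 : ℝ)))
    (huS : Integrable (fun ω => u (∑ i, X i ω)) P)
    (huX : Integrable (fun ω => u (X ⟨0, by omega⟩ ω)) P)
    (huSn : Integrable (fun ω => u ((∑ i, X i ω) / n)) P)
    (huε : ∀ ε ∈ Set.Ico (0 : ℝ) 1,
      Integrable (fun ω => u ((1 - ε) * (∑ i, X i ω) / n)) P) :
    (∫ ω, u ((∑ i, X i ω) / n) ∂P > ∫ ω, u (X ⟨0, by omega⟩ ω) ∂P) ∧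
    Tendsto (fun ε : ℝ => ∫ ω, u ((1 - ε) * (∑ i, X i ω) / n) ∂P)
      (nhdsWithin 0 (Set.Ioi 0)) (nhds (∫ ω, u ((∑ i, X i ω) / n) ∂P)) ∧
    ∃ ε₀ > (0 : ℝ), ∀ ε ∈ Set.Ioo (0 : ℝ) ε₀,
      ∫ ω, u ((1 - ε) * (∑ i, X i ω) / n) ∂P > ∫ ω, u (X ⟨0, by omega⟩ ω) ∂P := by

  classical
  have hn0 : 0 < n := by omega
  have hnR : (0:ℝ) < n := by exact_mod_cast hn0
  -- measurable modification of u
  have hite : ∀ x : ℝ, (0:ℝ) < (if 0 < x then x else 1) := fun x => by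
    split
    · assumption
    · norm_num
  have hrmeas : Measurable (fun x : ℝ => (⟨if 0 < x then x else 1, Set.mem_Ioi.2 (hite x)⟩ :
      Set.Ioi (0:ℝ))) :=
    Measurable.subtype_mk (Measurable.ite measurableSet_Ioi measurable_id measurable_const)
  set v : ℝ → ℝ := fun x => (Set.Ioi (0:ℝ)).restrict u
    (⟨if 0 < x then x else 1, Set.mem_Ioi.2 (hite x)⟩) with hvdef
  have hvmeas : Measurable v :=
    (continuousOn_iff_continuous_restrict.mp hcont).measurable.comp hrmeas
  have hv : ∀ x : ℝ, 0 < x → v x = u x := fun x hx => by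
    simp only [hvdef, Set.restrict_apply, if_pos hx]
    rfl
  -- positivity
  have hallpos : ∀ᵐ ω ∂P, ∀ i, 0 < X i ω := ae_all_iff.2 hpos
  have hSpos : ∀ᵐ ω ∂P, 0 < ∑ i, X i ω :=
    hallpos.mono fun ω h => Finset.sum_pos (fun i _ => h i) ⟨⟨0, hn0⟩, Finset.mem_univ _⟩
  -- identically distributed transfers
  have hvX_id : ∀ i : Fin n, ProbabilityTheory.IdentDistrib (fun ω => v (X i ω))
      (fun ω => v (X ⟨0, by omega⟩ ω)) P P := fun i => (hident i).comp hvmeas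
  have hvX0_int : Integrable (fun ω => v (X ⟨0, by omega⟩ ω)) P :=
    huX.congr ((hpos _).mono fun ω h => (hv _ h).symm)
  have hvX_int : ∀ i, Integrable (fun ω => v (X i ω)) P := fun i =>
    (hvX_id i).integrable_iff.mpr hvX0_int
  have hvX_int_eq : ∀ i, ∫ ω, v (X i ω) ∂P = ∫ ω, v (X ⟨0, by omega⟩ ω) ∂P := fun i =>
    (hvX_id i).integral_eq
  have hvSn_int : Integrable (fun ω => v ((∑ i, X i ω) / n)) P :=
    huSn.congr (hSpos.mono fun ω h => (hv _ (div_pos h hnR)).symm)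
  -- Jensen
  have hw1 : ∑ _i : Fin n, (n:ℝ)⁻¹ = 1 := by
    rw [Finset.sum_const, Finset.card_univ, Fintype.card_fin, nsmul_eq_mul,
      mul_inv_cancel₀ hnR.ne']
  have hsum_eq : ∀ ω, ∑ i, (n:ℝ)⁻¹ • X i ω = (∑ i, X i ω) / n := fun ω => by
    rw [← Finset.smul_sum, smul_eq_mul, div_eq_mul_inv, mul_comm]
  have hjen : ∀ᵐ ω ∂P, ∑ i, (n:ℝ)⁻¹ * v (X i ω) ≤ v ((∑ i, X i ω) / n) := by
    filter_upwards [hallpos] with ω hω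
    have hmem : ∀ i ∈ Finset.univ, X i ω ∈ Set.Ioi (0:ℝ) := fun i _ => hω i
    have h := hconc.concaveOn.le_map_sum (fun i _ => by positivity) hw1 hmem
    rw [hsum_eq ω] at h
    have hSp : 0 < (∑ i, X i ω)/n :=
      div_pos (Finset.sum_pos (fun i _ => hω i) ⟨⟨0, hn0⟩, Finset.mem_univ _⟩) hnR
    calc ∑ i, (n:ℝ)⁻¹ * v (X i ω) = ∑ i, (n:ℝ)⁻¹ • u (X i ω) := by
          refine Finset.sum_congr rfl fun i _ => ?_
          rw [smul_eq_mul, hv _ (hω i)]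
      _ ≤ u ((∑ i, X i ω)/n) := h
      _ = v ((∑ i, X i ω)/n) := (hv _ hSp).symm
  have hsum_int : Integrable (fun ω => ∑ i, (n:ℝ)⁻¹ * v (X i ω)) P :=
    integrable_finset_sum _ fun i _ => (hvX_int i).const_mul _
  have hg_int : Integrable
      (fun ω => v ((∑ i, X i ω)/n) - ∑ i, (n:ℝ)⁻¹ * v (X i ω)) P := hvSn_int.sub hsum_int
  have hg_nonneg : 0 ≤ᵐ[P] fun ω => v ((∑ i, X i ω)/n) - ∑ i, (n:ℝ)⁻¹ * v (X i ω) :=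
    hjen.mono fun ω h => sub_nonneg.2 h
  have hint_eq : ∫ ω, (v ((∑ i, X i ω)/n) - ∑ i, (n:ℝ)⁻¹ * v (X i ω)) ∂P
      = ∫ ω, v ((∑ i, X i ω)/n) ∂P - ∫ ω, v (X ⟨0, by omega⟩ ω) ∂P := by
    rw [integral_sub hvSn_int hsum_int]
    congr 1
    rw [integral_finset_sum _ fun i _ => (hvX_int i).const_mul _]
    have e : ∀ i : Fin n, ∫ ω, (n:ℝ)⁻¹ * v (X i ω) ∂P
        = (n:ℝ)⁻¹ * ∫ ω, v (X ⟨0, by omega⟩ ω) ∂P := fun i => by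
      simp_rw [← smul_eq_mul]
      rw [integral_smul, hvX_int_eq i, smul_eq_mul]
    rw [Finset.sum_congr rfl fun i _ => e i, Finset.sum_const, Finset.card_univ,
      Fintype.card_fin, nsmul_eq_mul, ← mul_assoc, mul_inv_cancel₀ hnR.ne', one_mul]
  have h_nonneg_int : 0 ≤ ∫ ω, (v ((∑ i, X i ω)/n) - ∑ i, (n:ℝ)⁻¹ * v (X i ω)) ∂P :=
    integral_nonneg_of_ae hg_nonneg
  have h_ne : ∫ ω, (v ((∑ i, X i ω)/n) - ∑ i, (n:ℝ)⁻¹ * v (X i ω)) ∂P ≠ 0 := by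
    intro h0
    have hzero : (fun ω => v ((∑ i, X i ω)/n) - ∑ i, (n:ℝ)⁻¹ * v (X i ω)) =ᵐ[P] 0 :=
      (integral_eq_zero_iff_of_nonneg_ae hg_nonneg hg_int).mp h0
    have heq01 : X ⟨0, by omega⟩ =ᵐ[P] X ⟨1, by omega⟩ := by
      filter_upwards [hzero, hallpos] with ω h0ω hω
      have hmem : ∀ i ∈ Finset.univ, X i ω ∈ Set.Ioi (0:ℝ) := fun i _ => hω i
      have hSp : 0 < (∑ i, X i ω)/n :=
        div_pos (Finset.sum_pos (fun i _ => hω i) ⟨⟨0, hn0⟩, Finset.mem_univ _⟩) hnR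
      have h0ω' : v ((∑ i, X i ω)/n) - ∑ i, (n:ℝ)⁻¹ * v (X i ω) = 0 := h0ω
      have h_eq : u (∑ i, (n:ℝ)⁻¹ • X i ω) ≤ ∑ i, (n:ℝ)⁻¹ • u (X i ω) := by
        rw [hsum_eq ω]
        have e1 : ∑ i, (n:ℝ)⁻¹ • u (X i ω) = ∑ i, (n:ℝ)⁻¹ * v (X i ω) := by
          refine Finset.sum_congr rfl fun i _ => ?_
          rw [smul_eq_mul, hv _ (hω i)]
        rw [e1, ← hv _ hSp]
        linarith [h0ω']
      exact hconc.eq_of_map_sum_eq (fun i _ => by positivity) hw1 hmem h_eq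
        (Finset.mem_univ _) (Finset.mem_univ _)
    have hne01 : (⟨0, by omega⟩ : Fin n) ≠ (⟨1, by omega⟩ : Fin n) := by
      simp [Fin.ext_iff]
    obtain ⟨c, hc⟩ := stmt13_ae_const P (hmeas _) (hindep.indepFun hne01) heq01
    exact hnonconst ⟨c, hc⟩
  have key1 : ∫ ω, u ((∑ i, X i ω) / n) ∂P > ∫ ω, u (X ⟨0, by omega⟩ ω) ∂P := by
    have h1 : ∫ ω, u ((∑ i, X i ω)/n) ∂P = ∫ ω, v ((∑ i, X i ω)/n) ∂P :=
      integral_congr_ae (hSpos.mono fun ω h => (hv _ (div_pos h hnR)).symm)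
    have h2 : ∫ ω, u (X ⟨0, by omega⟩ ω) ∂P = ∫ ω, v (X ⟨0, by omega⟩ ω) ∂P :=
      integral_congr_ae ((hpos _).mono fun ω h => (hv _ h).symm)
    rw [gt_iff_lt, h1, h2, ← sub_pos, ← hint_eq]
    exact lt_of_le_of_ne h_nonneg_int (Ne.symm h_ne)
  have key2 : Tendsto (fun ε : ℝ => ∫ ω, u ((1 - ε) * (∑ i, X i ω) / n) ∂P)
      (nhdsWithin 0 (Set.Ioi 0)) (nhds (∫ ω, u ((∑ i, X i ω) / n) ∂P)) := by
    have hmemIoo : Set.Ioo (0:ℝ) (1/2) ∈ nhdsWithin (0:ℝ) (Set.Ioi 0) :=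
      Ioo_mem_nhdsGT_of_mem ⟨le_refl 0, by norm_num⟩
    have hbound_int : Integrable (fun ω =>
        |u ((1 - (0:ℝ)) * (∑ i, X i ω) / n)| + 4*|u ((1 - (1/2:ℝ)) * (∑ i, X i ω) / n)|
          + 3*|u ((1 - (3/4:ℝ)) * (∑ i, X i ω) / n)|) P := by
      exact ((huε 0 (by norm_num)).abs.add
        ((huε (1/2) (by norm_num)).abs.const_mul 4)).add
        ((huε (3/4) (by norm_num)).abs.const_mul 3)
    have hSn_eq : (fun ω => u ((∑ i, X i ω) / n)) = fun ω => u ((1 - (0:ℝ)) * (∑ i, X i ω) / n) := by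
      funext ω; norm_num
    refine tendsto_integral_filter_of_dominated_convergence _ ?_ ?_ hbound_int ?_
    · filter_upwards [hmemIoo] with ε hε
      exact (huε ε ⟨hε.1.le, by linarith [hε.2]⟩).aestronglyMeasurable
    · filter_upwards [hmemIoo] with ε hε
      filter_upwards [hSpos] with ω hω
      have hc : 0 < (∑ i, X i ω)/n := div_pos hω hnR
      have e0 : (1 - (0:ℝ)) * (∑ i, X i ω)/n = (∑ i, X i ω)/n := by ring
      have e1 : (1 - (1/2:ℝ)) * (∑ i, X i ω)/n = ((∑ i, X i ω)/n)/2 := by ring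
      have e2 : (1 - (3/4:ℝ)) * (∑ i, X i ω)/n = ((∑ i, X i ω)/n)/4 := by ring
      rw [Real.norm_eq_abs, e0, e1, e2]
      have ht : (1 - ε) * (∑ i, X i ω)/n = (1 - ε) * ((∑ i, X i ω)/n) := by ring
      have ht1 : ((∑ i, X i ω)/n)/2 ≤ (1 - ε) * (∑ i, X i ω)/n := by
        rw [ht]
        nlinarith [hε.2, hc]
      have ht2 : (1 - ε) * (∑ i, X i ω)/n ≤ (∑ i, X i ω)/n := by
        rw [ht]
        nlinarith [hε.1, hc]
      exact stmt13_concave_bound hconc.concaveOn hc ht1 ht2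
    · filter_upwards [hSpos] with ω hω
      have hc : 0 < (∑ i, X i ω)/n := div_pos hω hnR
      have hcont_at : ContinuousAt u ((1 - (0:ℝ)) * (∑ i, X i ω)/n) := by
        rw [show (1 - (0:ℝ)) * (∑ i, X i ω)/n = (∑ i, X i ω)/n by ring]
        exact hcont.continuousAt (Ioi_mem_nhds hc)
      have hmap : ContinuousAt (fun ε : ℝ => (1 - ε) * (∑ i, X i ω)/n) 0 := by fun_prop
      have h : ContinuousAt (fun ε : ℝ => u ((1 - ε) * (∑ i, X i ω)/n)) 0 :=
        ContinuousAt.comp (g := u) (f := fun ε : ℝ => (1 - ε) * (∑ i, X i ω)/n) (x := 0)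
          hcont_at hmap
      have h2 : Tendsto (fun ε : ℝ => u ((1 - ε) * (∑ i, X i ω)/n)) (nhds 0)
          (nhds (u ((∑ i, X i ω)/n))) := by
        have := h.tendsto
        simpa using this
      exact h2.mono_left nhdsWithin_le_nhds
  refine ⟨key1, key2, ?_⟩
  have hev : ∀ᶠ ε in nhdsWithin (0:ℝ) (Set.Ioi 0),
      ∫ ω, u (X ⟨0, by omega⟩ ω) ∂P < ∫ ω, u ((1 - ε) * (∑ i, X i ω) / n) ∂P :=
    key2.eventually_const_lt key1
  rw [eventually_nhdsWithin_iff, Metric.eventually_nhds_iff] at hev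
  obtain ⟨δ, hδ, h⟩ := hev
  refine ⟨δ, hδ, fun ε hε => ?_⟩
  exact h (by rw [Real.dist_eq, sub_zero, abs_of_pos hε.1]; exact hε.2) hε.1
end

section
/- An allocation mechanism H satisfies Frictional Participation if and only if for all Y ∈ X^n, all i ≠ j in [n], and all G ∈ Σ, H_i(X|G) + H_j(X|G) ≥ H_i(Y|G) + H_j(Y|G), where X := Y − Y_j e^{(j)} + Y_j e^{(i)} (i.e., merging agent j's endowment into agent i's weakly increases the joint allocation of i and j). -/
open MeasureTheory

/-- Transfer an amount `Z` from agent `i` to agent `j`: `X + Z e⁽ʲ⁾ − Z e⁽ⁱ⁾`. -/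
noncomputable def transfer15 {α : Type*} [AddCommGroup α] {n : ℕ}
    (X : Fin n → α) (i j : Fin n) (Z : α) : Fin n → α :=
  fun k => X k + (if k = j then Z else 0) - (if k = i then Z else 0)

lemma transfer15_self {α : Type*} [AddCommGroup α] {n : ℕ}
    (X : Fin n → α) (i : Fin n) (Z : α) : transfer15 X i i Z = X := by
  funext k; simp [transfer15]

lemma transfer15_inv {α : Type*} [AddCommGroup α] {n : ℕ}
    (X : Fin n → α) (i j : Fin n) (hij : i ≠ j) (Z : α) (hXj : X j = 0) :
    transfer15 (transfer15 X i j Z) j i (transfer15 X i j Z j) = X := by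
  funext k
  simp only [transfer15]
  by_cases hki : k = i <;> by_cases hkj : k = j <;>
    simp_all [hij, Ne.symm hij] <;> abel

/-- An allocation mechanism `H` satisfies Frictional Participation (the
local frictional cost weakly increases when a subsidization transfer is made to an agent
with zero endowment) if and only if merging agent `j`'s endowment into agent `i`'s
weakly increases the joint allocation of `i` and `j`, for all `Y`, `i ≠ j`, and `G`. -/
theorem stmt_15 {Ω : Type*} [F : MeasurableSpace Ω] (P : Measure Ω)
    [IsProbabilityMeasure P] (n : ℕ)
    (H : (Fin n → Lp ℝ 1 P) → {G : MeasurableSpace Ω // G ≤ F} → (Fin n → Lp ℝ 1 P))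
    (halloc : ∀ X G, ∑ k, H X G k ≤ ∑ k, X k) :
    -- Frictional Participation:
    (∀ (G : {G : MeasurableSpace Ω // G ≤ F}) (Z : Lp ℝ 1 P) (i : Fin n)
        (X : Fin n → Lp ℝ 1 P) (j : Fin n), X j = 0 →
        X i + X j - H X G i - H X G j ≤
          transfer15 X i j Z i + transfer15 X i j Z j
            - H (transfer15 X i j Z) G i - H (transfer15 X i j Z) G j)
    ↔
    -- merging weakly increases the pair's allocation:
    (∀ (Y : Fin n → Lp ℝ 1 P) (i j : Fin n), i ≠ j →
      ∀ G : {G : MeasurableSpace Ω // G ≤ F},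
        H Y G i + H Y G j ≤
          H (transfer15 Y j i (Y j)) G i + H (transfer15 Y j i (Y j)) G j) := by
  constructor
  · intro hFP Y i j hij G
    set X := transfer15 Y j i (Y j) with hX
    have hXj : X j = 0 := by simp [hX, transfer15, Ne.symm hij]
    have hYeq : transfer15 X i j (Y j) = Y := by
      funext k
      simp only [hX, transfer15]
      by_cases hki : k = i <;> by_cases hkj : k = j <;>
        simp_all [hij, Ne.symm hij] <;> abel
    have h := hFP G (Y j) i X j hXj
    rw [hYeq] at h
    have hXi : X i = Y i + Y j := by simp [hX, transfer15, hij]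
    have hTi : transfer15 Y j i (Y j) i = Y i + Y j := hXi
    -- X i + X j = Y i + Y j
    have hsum : X i + X j = Y i + Y j := by
      rw [hXi, hXj]; abel
    -- transfer15 back: the Y side sums
    have h2 : Y i + Y j - H X G i - H X G j ≤ Y i + Y j - H Y G i - H Y G j := by
      calc Y i + Y j - H X G i - H X G j = X i + X j - H X G i - H X G j := by
            rw [hsum]
        _ ≤ Y i + Y j - H Y G i - H Y G j := h
    have h3 : (Y i + Y j) - (H X G i + H X G j) ≤ (Y i + Y j) - (H Y G i + H Y G j) := by
      rw [← sub_sub, ← sub_sub]; exact h2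
    have := sub_le_sub_iff_left (a := Y i + Y j)
      |>.mp h3
    exact this
  · intro hM G Z i X j hXj
    by_cases hij : i = j
    · subst hij; rw [transfer15_self]
    · have h := hM (transfer15 X i j Z) i j (by exact hij) G
      rw [transfer15_inv X i j hij Z hXj] at h
      have hYi : transfer15 X i j Z i = X i - Z := by simp [transfer15, hij]
      have hYj : transfer15 X i j Z j = Z := by simp [transfer15, Ne.symm hij, hXj]
      have hsum : transfer15 X i j Z i + transfer15 X i j Z j = X i + X j := by
        rw [hYi, hYj, hXj]; abel
      rw [hsum]
      rw [sub_sub, sub_sub]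
      exact sub_le_sub_left h _
end
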